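/- arXiv:math/0312461 — 3 statements merged into one kernel-verified Lean document; each statement's English description precedes it below -/
import Mathlib

section
/- For a state p of the box ball system, the quantity E_l(p) = −Σ_{j=1}^L H(b^{(j−1)} ⊗ b_j) is a nonnegative integer and does not depend on the size L of the system (provided L is sufficiently large compared with the support of p). -/
/-- A semistandard rectangular tableau with `k` rows, `l` columns and entries in `{1,…,n}`:
rows weakly increase left to right, columns strictly increase top to bottom. -/
structure RectTableau (n k l : ℕ) where
  entry : Fin k → Fin l → ℕ
  entry_pos : ∀ i j, 1 ≤ entry i j
  entry_le : ∀ i j, entry i j ≤ n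
  row_mono : ∀ i, Monotone (entry i)
  col_strict : ∀ j, StrictMono fun i => entry i j

namespace BBS

open scoped Classical

variable {n k l k' l' d d1 d2 : ℕ}

/-- The rows of a tableau, from top to bottom, each read left to right. -/
def toRows (x : RectTableau n k l) : List (List ℕ) :=
  (List.finRange k).map fun i => (List.finRange l).map fun j => x.entry i j

/-- The row word of a tableau: rows read left to right, bottom row first. -/
def rowWord (x : RectTableau n k l) : List ℕ :=
  ((List.finRange k).reverse).flatMap fun i => (List.finRange l).map fun j => x.entry i j

/-- Schensted row insertion of a single letter into a tableau (given as a list of rows). -/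
def rowInsertOne : List (List ℕ) → ℕ → List (List ℕ)
  | [], a => [[a]]
  | r :: rest, a =>
    match r.findIdx? (fun x => decide (a < x)) with
    | none => (r ++ [a]) :: rest
    | some idx => (r.set idx a) :: rowInsertOne rest (r.getD idx 0)

/-- Schensted row insertion of a word (leftmost letter first). -/
def rowInsertWord (T : List (List ℕ)) (w : List ℕ) : List (List ℕ) :=
  w.foldl rowInsertOne T

/-- The combinatorial `R`-matrix `B^{k,l} ⊗ B^{k',l'} → B^{k',l'} ⊗ B^{k,l}`, defined through
its row-insertion characterization: `x ⊗ y ↦ x̃ ⊗ ỹ` where `y ← row(x) = ỹ ← row(x̃)`. -/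
noncomputable def combR (x : RectTableau n k l) (y : RectTableau n k' l') :
    RectTableau n k' l' × RectTableau n k l :=
  if h : ∃ p : RectTableau n k' l' × RectTableau n k l,
      rowInsertWord (toRows p.2) (rowWord p.1) = rowInsertWord (toRows y) (rowWord x)
  then h.choose else (y, x)

/-- The number of boxes of a tableau strictly east of the `c`-th column. -/
def eastCount (T : List (List ℕ)) (c : ℕ) : ℕ := (T.map fun r => r.length - c).sum

/-- The energy function `H` on `B^{k,l} ⊗ B^{k',l'}`. -/
def energyH (x : RectTableau n k l) (y : RectTableau n k' l') : ℤ :=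
  (eastCount (rowInsertWord (toRows y) (rowWord x)) (max l l') : ℤ)
    - (min k k' : ℤ) * (min l l' : ℤ)

/-- The tableau `c_l = 1_k^l` all of whose columns are `(1,2,…,k)ᵗ`. -/
def constTab (n k l : ℕ) (h : k ≤ n) : RectTableau n k l where
  entry i _ := i.1 + 1
  entry_pos := by intro i j; (try dsimp only); omega
  entry_le := by intro i j; have := i.isLt; (try dsimp only); omega
  row_mono := fun _ => monotone_const
  col_strict := by
    intro j a b hab
    have h3 : a.1 < b.1 := hab
    dsimp only; omega

/-- Passing the carrier `c ∈ B^{k,l}` through a sequence of boxes by iterating the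
combinatorial `R : B^{k,l} ⊗ B^{k,1} → B^{k,1} ⊗ B^{k,l}`. -/
noncomputable def carrierPass : RectTableau n k l → List (RectTableau n k 1) →
    List (RectTableau n k 1) × RectTableau n k l
  | c, [] => ([], c)
  | c, b :: rest =>
    let bc := combR c b
    let rc := carrierPass bc.2 rest
    (bc.1 :: rc.1, rc.2)

/-- The box ball time evolution `T_l`. -/
noncomputable def timeEv (h : k ≤ n) (l : ℕ) (p : List (RectTableau n k 1)) :
    List (RectTableau n k 1) :=
  (carrierPass (constTab n k l h) p).1

/-- `∑_j H(b^{(j-1)} ⊗ b_j)` along a carrier pass. -/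
noncomputable def energySum : RectTableau n k l → List (RectTableau n k 1) → ℤ
  | _, [] => 0
  | c, b :: rest => energyH c b + energySum (combR c b).2 rest

/-- The conserved quantity `E_l(p) = -∑_j H(b^{(j-1)} ⊗ b_j)`. -/
noncomputable def bbsE (h : k ≤ n) (l : ℕ) (p : List (RectTableau n k 1)) : ℤ :=
  - energySum (constTab n k l h) p

/-- The word used in the signature rule: columns from right to left, each read top to bottom. -/
def sigWord (x : RectTableau n k l) : List ℕ :=
  ((List.finRange l).reverse).flatMap fun j => (List.finRange k).map fun i => x.entry i j

/-- The positions of the unpaired `-`'s (letters `i+1`) and unpaired `+`'s (letters `i`) of a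
word, after repeatedly deleting adjacent `+-` pairs.  The first component lists the unpaired
`-` positions in increasing order; the second lists the unpaired `+` positions in
decreasing order. -/
def sigUnpaired (i : ℕ) (w : List ℕ) : List ℕ × List ℕ :=
  (w.zipIdx.map Prod.swap).foldl (fun mp x =>
    if x.2 = i then (mp.1, x.1 :: mp.2)
    else if x.2 = i + 1 then
      match mp.2 with
      | [] => (mp.1 ++ [x.1], [])
      | _ :: rest => (mp.1, rest)
    else mp) ([], [])

/-- The Kashiwara operator `e_i` on words, via the signature rule. -/
def eWord (i : ℕ) (w : List ℕ) : Option (List ℕ) :=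
  match (sigUnpaired i w).1.getLast? with
  | none => none
  | some p => some (w.set p i)

/-- The Kashiwara operator `f_i` on words, via the signature rule. -/
def fWord (i : ℕ) (w : List ℕ) : Option (List ℕ) :=
  match (sigUnpaired i w).2.getLast? with
  | none => none
  | some p => some (w.set p (i + 1))

/-- Kashiwara operator `e_i` on a two-fold tensor product of rectangular tableaux. -/
noncomputable def eTen (i : ℕ) (p : RectTableau n k l × RectTableau n k' l') :
    Option (RectTableau n k l × RectTableau n k' l') :=
  match eWord i (sigWord p.1 ++ sigWord p.2) with
  | none => none
  | some w =>
    if h : ∃ q : RectTableau n k l × RectTableau n k' l',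
        sigWord q.1 ++ sigWord q.2 = w then some h.choose else none

/-- Kashiwara operator `f_i` on a two-fold tensor product of rectangular tableaux. -/
noncomputable def fTen (i : ℕ) (p : RectTableau n k l × RectTableau n k' l') :
    Option (RectTableau n k l × RectTableau n k' l') :=
  match fWord i (sigWord p.1 ++ sigWord p.2) with
  | none => none
  | some w =>
    if h : ∃ q : RectTableau n k l × RectTableau n k' l',
        sigWord q.1 ++ sigWord q.2 = w then some h.choose else none

/-- Kashiwara operator `e_i` on `(B^{k,1})^{⊗L}`. -/
noncomputable def eList (i : ℕ) (p : List (RectTableau n k 1)) :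
    Option (List (RectTableau n k 1)) :=
  match eWord i (p.flatMap sigWord) with
  | none => none
  | some w =>
    if h : ∃ q : List (RectTableau n k 1), q.length = p.length ∧ q.flatMap sigWord = w
    then some h.choose else none

/-- Kashiwara operator `f_i` on `(B^{k,1})^{⊗L}`. -/
noncomputable def fList (i : ℕ) (p : List (RectTableau n k 1)) :
    Option (List (RectTableau n k 1)) :=
  match fWord i (p.flatMap sigWord) with
  | none => none
  | some w =>
    if h : ∃ q : List (RectTableau n k 1), q.length = p.length ∧ q.flatMap sigWord = w
    then some h.choose else none

/-- Elementary Knuth transformations. -/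
inductive KnuthStep : List ℕ → List ℕ → Prop where
  | xzy (u v : List ℕ) (x y z : ℕ) (h1 : x ≤ y) (h2 : y < z) :
      KnuthStep (u ++ x :: z :: y :: v) (u ++ z :: x :: y :: v)
  | yxz (u v : List ℕ) (x y z : ℕ) (h1 : x < y) (h2 : y ≤ z) :
      KnuthStep (u ++ y :: x :: z :: v) (u ++ y :: z :: x :: v)

/-- Knuth equivalence of words. -/
def KnuthEquiv : List ℕ → List ℕ → Prop := Relation.EqvGen KnuthStep

/-- The column `(1,…,k-2,m,b)ᵗ ∈ B^{k,1}` (where `m` sits in row `k-1` and `b` in row `k`). -/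
def mkCol (n k m b : ℕ) (hm : k ≤ m + 1) (hb : m < b) (hn : b ≤ n) : RectTableau n k 1 where
  entry i _ := if i.1 + 1 = k then b else if i.1 + 2 = k then m else i.1 + 1
  entry_pos := by intro i j; (try dsimp only); split_ifs <;> omega
  entry_le := by intro i j; have := i.isLt; (try dsimp only); split_ifs <;> omega
  row_mono := fun _ => monotone_const
  col_strict := by
    intro j a b' hab
    have h1 := a.isLt; have h2 := b'.isLt
    have h3 : a.1 < b'.1 := hab
    dsimp only; split_ifs <;> omega

/-- `[𝟎] = (1,…,k-1,k)ᵗ`. -/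
def col0 (n k : ℕ) (hk : 1 ≤ k) (h : k ≤ n) : RectTableau n k 1 :=
  mkCol n k (k-1) k (by omega) (by omega) h
/-- `[𝟏] = (1,…,k-1,k+1)ᵗ`. -/
def col1 (n k : ℕ) (hk : 1 ≤ k) (h : k + 1 ≤ n) : RectTableau n k 1 :=
  mkCol n k (k-1) (k+1) (by omega) (by omega) h
/-- `[𝟐₊] = (1,…,k-2,k,k+1)ᵗ`. -/
def col2p (n k : ℕ) (hk : 1 ≤ k) (h : k + 1 ≤ n) : RectTableau n k 1 :=
  mkCol n k k (k+1) (by omega) (by omega) h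
/-- `[𝟐₋] = (1,…,k-2,k-1,k+2)ᵗ`. -/
def col2m (n k : ℕ) (hk : 1 ≤ k) (h : k + 2 ≤ n) : RectTableau n k 1 :=
  mkCol n k (k-1) (k+2) (by omega) (by omega) h
/-- `[𝟑] = (1,…,k-2,k,k+2)ᵗ`. -/
def col3 (n k : ℕ) (hk : 1 ≤ k) (h : k + 2 ≤ n) : RectTableau n k 1 :=
  mkCol n k k (k+2) (by omega) (by omega) h
/-- `[𝟒] = (1,…,k-2,k+1,k+2)ᵗ`. -/
def col4 (n k : ℕ) (hk : 1 ≤ k) (h : k + 2 ≤ n) : RectTableau n k 1 :=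
  mkCol n k (k+1) (k+2) (by omega) (by omega) h

/-- `ξ_i = [𝟎^{l-i} 𝟏^i] ∈ B^{k,l}`: the first `l-i` columns equal `[𝟎]`, the last `i`
columns equal `[𝟏]`. -/
def xiTab (n k l i : ℕ) (hk : 1 ≤ k) (hkn : k < n) : RectTableau n k l where
  entry r j := if r.1 + 1 = k ∧ l - i ≤ j.1 then k + 1 else r.1 + 1
  entry_pos := by intro r j; (try dsimp only); split_ifs <;> omega
  entry_le := by intro r j; have := r.isLt; (try dsimp only); split_ifs <;> omega
  row_mono := by
    intro r a b hab
    have h3 : a.1 ≤ b.1 := hab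
    dsimp only; split_ifs <;> omega
  col_strict := by
    intro j a b hab
    have h1 := a.isLt; have h2 := b.isLt
    have h3 : a.1 < b.1 := hab
    dsimp only; split_ifs <;> omega

/-- The rectangular tableau `[𝟏^a 𝟐_s^{ab-a} 𝟑^{d-ab}] ∈ B^{k,d}` whose first `a` columns are
`[𝟏]`, whose next columns (up to column `ab`) are `[𝟐₊]` (if `s`) or `[𝟐₋]` (if `¬s`), and
whose remaining columns are `[𝟑]`. -/
def pat3 (n k d a ab : ℕ) (s : Bool) (hk : 2 ≤ k) (hn : k + 2 ≤ n) : RectTableau n k d where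
  entry i j :=
    if i.1 + 1 = k then
      (if j.1 < a then k+1 else if j.1 < ab then (if s then k+1 else k+2) else k+2)
    else if i.1 + 2 = k then
      (if j.1 < a then k-1 else if j.1 < ab then (if s then k else k-1) else k)
    else i.1 + 1
  entry_pos := by intro i j; (try dsimp only); split_ifs <;> omega
  entry_le := by intro i j; have := i.isLt; (try dsimp only); split_ifs <;> omega
  row_mono := by
    intro i a' b' hab
    have h3 : a'.1 ≤ b'.1 := hab
    dsimp only; split_ifs <;> omega
  col_strict := by
    intro j a' b' hab
    have h1 := a'.isLt; have h2 := b'.isLt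
    have h3 : a'.1 < b'.1 := hab
    dsimp only; split_ifs <;> omega

/-- The `k`-th (bottom) row of a rectangular tableau, as an element of `B^{1,d}`. -/
def rowK (hk : 1 ≤ k) (u : RectTableau n k d) : RectTableau n 1 d where
  entry _ j := u.entry ⟨k - 1, by omega⟩ j
  entry_pos := fun _ j => u.entry_pos _ j
  entry_le := fun _ j => u.entry_le _ j
  row_mono := fun _ => u.row_mono _
  col_strict := by
    intro j a b hab
    have h3 : a.1 < b.1 := hab
    have h1 := a.isLt; have h2 := b.isLt
    exact absurd h3 (by omega)

/-- The first `k-1` rows of a rectangular tableau, as an element of `B^{k-1,d}`. -/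
def rowsLt (u : RectTableau n k d) : RectTableau n (k-1) d where
  entry i j := u.entry (Fin.castLE (Nat.sub_le k 1) i) j
  entry_pos := fun i j => u.entry_pos _ j
  entry_le := fun i j => u.entry_le _ j
  row_mono := fun i => u.row_mono _
  col_strict := by
    intro j a b hab
    exact u.col_strict j (show Fin.castLE (Nat.sub_le k 1) a < Fin.castLE (Nat.sub_le k 1) b from hab)

/-- The soliton conditions on a sequence of columns `S = (b_1,…,b_d)`, `b_j ∈ B^{k,1}`:
entries weakly decrease along each row of the sequence, the entry in row `k-1` of each
column is `≤ k` and the entry in row `k` is `> k`.  (Strict increase down each column is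
already part of the tableau structure.) -/
def IsSolitonFn {n k d : ℕ} (S : Fin d → RectTableau n k 1) : Prop :=
  (∀ j j' : Fin d, j.1 + 1 = j'.1 → ∀ (i : Fin k) (t : Fin 1),
      (S j').entry i t ≤ (S j).entry i t) ∧
  (∀ (j : Fin d) (i : Fin k) (t : Fin 1), i.1 + 1 = k → k < (S j).entry i t) ∧
  (∀ (j : Fin d) (i : Fin k) (t : Fin 1), i.1 + 2 = k → (S j).entry i t ≤ k)

/-- `lo` and `hi` are the two pieces `u_{<k} ∈ B^{k-1,d}` and `u_k ∈ B^{1,d}` of the internal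
degree of freedom `u = [b_d,…,b_1] ∈ B^{k,d}` of the soliton `S = (b_1,…,b_d)`. -/
def SplitDof {n k d : ℕ} (hk : 1 ≤ k) (S : Fin d → RectTableau n k 1)
    (lo : RectTableau n (k-1) d) (hi : RectTableau n 1 d) : Prop :=
  (∀ (i : Fin (k-1)) (j : Fin d),
      lo.entry i j = (S j.rev).entry (Fin.castLE (Nat.sub_le k 1) i) ⟨0, Nat.one_pos⟩) ∧
  (∀ (t : Fin 1) (j : Fin d),
      hi.entry t j = (S j.rev).entry ⟨k - 1, by omega⟩ ⟨0, Nat.one_pos⟩)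

/-- `(lo, hi) ∈ B^{k-1,d} × B^{1,d}` is the split internal degree of freedom of a soliton:
the entries of `lo` lie in `{1,…,k}` and those of `hi` in `{k+1,…,n}`. -/
def IsDof (k : ℕ) {n d : ℕ} (lo : RectTableau n (k-1) d) (hi : RectTableau n 1 d) : Prop :=
  (∀ i j, lo.entry i j ≤ k) ∧ (∀ t j, k < hi.entry t j)

/-- The two-body scattering map `R̃` on solitons with phases: internal degrees of freedom are
exchanged by the product of combinatorial `R`-matrices and the phases shift by
`δ = 2 d₂ + H(u_k ⊗ v_k) + H(u_{<k} ⊗ v_{<k})`. -/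
noncomputable def Rtilde {n k d1 d2 : ℕ}
    (a : ℤ × RectTableau n (k-1) d1 × RectTableau n 1 d1)
    (b : ℤ × RectTableau n (k-1) d2 × RectTableau n 1 d2) :
    (ℤ × RectTableau n (k-1) d2 × RectTableau n 1 d2)
      × (ℤ × RectTableau n (k-1) d1 × RectTableau n 1 d1) :=
  ((b.1 - (2 * (d2:ℤ) + energyH a.2.2 b.2.2 + energyH a.2.1 b.2.1),
      (combR a.2.1 b.2.1).1, (combR a.2.2 b.2.2).1),
   (a.1 + (2 * (d2:ℤ) + energyH a.2.2 b.2.2 + energyH a.2.1 b.2.1),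
      (combR a.2.1 b.2.1).2, (combR a.2.2 b.2.2).2))

end BBS

/-!
`E_l` is minus a sum of energies `H(b ⊗ b_j)` with `b ∈ B^{k,l}` and `b_j ∈ B^{k,1}`, each
computed by Schensted insertion of the row word of `b` into the column `b_j`. Row insertion
keeps column strictness (the bumping lemma), so no row is longer than the first one; and the
first row never exceeds `l + 1` boxes, because each row of `b` passes through it while it lies
weakly above the previously inserted row, shifted by one place. With `k (l + 1)` boxes in total
at most `k` of them lie east of column `l`, so `H ≤ 0`. For the vacuum column `1_k` insertion
merely prepends the column to `b`, exactly `k` boxes lie east of column `l`, and `H = 0`; so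
the vacuum sites appended to a state contribute nothing to `E_l`.
-/

namespace BBS

/-- `RowAbove R r s`: the row `s` is no longer than `r`, and each entry of `s` is related by `R`
to the entry of `r` directly above it. -/
inductive RowAbove {α : Type*} (R : α → α → Prop) : List α → List α → Prop
  | nil (r : List α) : RowAbove R r []
  | cons {x y : α} {r s : List α} : R x y → RowAbove R r s → RowAbove R (x :: r) (y :: s)

namespace RowAbove

variable {α : Type*} {R S T : α → α → Prop} {r s t : List α}

theorem length_le (h : RowAbove R r s) : s.length ≤ r.length := by
  induction h with
  | nil => exact Nat.zero_le _
  | cons _ _ ih => exact Nat.succ_le_succ ih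

theorem refl (hR : ∀ x, R x x) : ∀ r : List α, RowAbove R r r
  | [] => nil []
  | x :: r => cons (hR x) (refl hR r)

theorem of_forall₂ (h : List.Forall₂ R r s) : RowAbove R r s := by
  induction h with
  | nil => exact nil []
  | cons hxy _ ih => exact cons hxy ih

theorem append_right (h : RowAbove R r s) (t : List α) : RowAbove R (r ++ t) s := by
  induction h with
  | nil r => exact nil _
  | cons hxy _ ih => exact cons hxy ih

theorem trans (h₁ : RowAbove R r s) (h₂ : RowAbove S s t)
    (hRS : ∀ x y z, R x y → S y z → T x z) : RowAbove T r t := by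
  induction h₁ generalizing t with
  | nil => cases h₂; exact nil _
  | cons hxy _ ih =>
    cases h₂ with
    | nil => exact nil _
    | cons hyz h => exact cons (hRS _ _ _ hxy hyz) (ih h)

theorem le_of_mem [Preorder α] {m : α} (h : RowAbove (· < ·) r s) (hr : ∀ x ∈ r, m ≤ x) :
    ∀ y ∈ s, m ≤ y := by
  induction h with
  | nil => simp
  | cons hxy _ ih =>
    simp only [List.mem_cons, forall_eq_or_imp] at hr ⊢
    exact ⟨(hr.1.trans_lt hxy).le, ih hr.2⟩

end RowAbove

theorem length_le_head_of_isChain {α : Type*} {R : α → α → Prop} {T : List (List α)}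
    (hT : T.IsChain (RowAbove R)) : ∀ r ∈ T, r.length ≤ (T.headD []).length := by
  have hpair : (T.map List.length).Pairwise (· ≥ ·) :=
    List.isChain_iff_pairwise.mp ((List.isChain_map _).mpr (hT.imp fun _ _ h => h.length_le))
  cases T with
  | nil => simp
  | cons r₀ T =>
    simp only [List.map_cons, List.pairwise_cons, List.mem_map] at hpair
    simp only [List.mem_cons, List.headD_cons, forall_eq_or_imp, le_refl, true_and]
    exact fun r hr => hpair.1 _ ⟨r, hr, rfl⟩

theorem le_of_mem_of_isChain {a : ℕ} {r : List ℕ} {R : List (List ℕ)}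
    (hR : (r :: R).IsChain (RowAbove (· < ·))) (ha : ∀ y ∈ r, a ≤ y) :
    ∀ t ∈ r :: R, ∀ y ∈ t, a ≤ y := by
  induction R generalizing r with
  | nil => simpa using ha
  | cons s R ih =>
    rw [List.isChain_cons_cons] at hR
    rintro t (_ | ⟨_, ht⟩)
    · exact ha
    · exact ih hR.2 (hR.1.le_of_mem ha) t ht

/-- Row insertion into a single row, in recursive form: the new row and the bumped letter, if
any (see `rowInsertOne_cons`). -/
def insertRow : List ℕ → ℕ → List ℕ × Option ℕ
  | [], a => ([a], none)
  | x :: s, a =>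
    if a < x then (a :: s, some x) else (x :: (insertRow s a).1, (insertRow s a).2)

def insertWord : List ℕ → List ℕ → List ℕ × List ℕ
  | r, [] => (r, [])
  | r, a :: w =>
    ((insertWord (insertRow r a).1 w).1,
      (insertRow r a).2.toList ++ (insertWord (insertRow r a).1 w).2)

theorem insertRow_eq_findIdx? (r : List ℕ) (a : ℕ) :
    insertRow r a = match r.findIdx? (fun x => decide (a < x)) with
      | none => (r ++ [a], none)
      | some i => (r.set i a, some (r.getD i 0)) := by
  induction r with
  | nil => rfl
  | cons x s ih =>
    by_cases hax : a < x
    · simp [insertRow, hax, List.findIdx?_cons]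
    · rw [insertRow, if_neg hax, ih, List.findIdx?_cons, if_neg (by simpa using hax)]
      cases s.findIdx? (fun x => decide (a < x)) <;> rfl

theorem rowInsertOne_cons (r : List ℕ) (rest : List (List ℕ)) (a : ℕ) :
    rowInsertOne (r :: rest) a
      = (insertRow r a).1 :: (insertRow r a).2.elim rest (rowInsertOne rest) := by
  rw [rowInsertOne, insertRow_eq_findIdx?]
  cases r.findIdx? (fun x => decide (a < x)) <;> rfl

theorem rowInsertWord_cons (r : List ℕ) (rest : List (List ℕ)) (w : List ℕ) :
    rowInsertWord (r :: rest) w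
      = (insertWord r w).1 :: rowInsertWord rest (insertWord r w).2 := by
  induction w generalizing r rest with
  | nil => rfl
  | cons a w ih =>
    have hstep : rowInsertWord (r :: rest) (a :: w) = rowInsertWord
        ((insertRow r a).1 :: (insertRow r a).2.elim rest (rowInsertOne rest)) w := by
      rw [rowInsertWord, List.foldl_cons, rowInsertOne_cons]
      rfl
    rw [hstep, ih, insertWord]
    cases (insertRow r a).2 <;> rfl

theorem insertWord_append (r w₁ w₂ : List ℕ) :
    insertWord r (w₁ ++ w₂) = ((insertWord (insertWord r w₁).1 w₂).1,
      (insertWord r w₁).2 ++ (insertWord (insertWord r w₁).1 w₂).2) := by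
  induction w₁ generalizing r with
  | nil => rfl
  | cons a w ih => simp [insertWord, ih]

theorem insertWord_cons_of_le {x : ℕ} {w : List ℕ} (hw : ∀ a ∈ w, x ≤ a) (s : List ℕ) :
    insertWord (x :: s) w = (x :: (insertWord s w).1, (insertWord s w).2) := by
  induction w generalizing s with
  | nil => rfl
  | cons a w ih =>
    have hax : ¬ a < x := not_lt.mpr (hw a List.mem_cons_self)
    simp only [insertWord, insertRow, if_neg hax]
    rw [ih fun b hb => hw b (List.mem_cons_of_mem a hb)]

theorem insertRow_fst_eq_append {r : List ℕ} {a : ℕ} (h : (insertRow r a).2 = none) :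
    (insertRow r a).1 = r ++ [a] := by
  induction r with
  | nil => rfl
  | cons x s ih =>
    by_cases hax : a < x
    · simp [insertRow, hax] at h
    · simp only [insertRow, if_neg hax] at h ⊢
      rw [ih h, List.cons_append]

theorem lt_of_insertRow_snd_eq_some {r : List ℕ} {a b : ℕ} (h : (insertRow r a).2 = some b) :
    a < b := by
  induction r with
  | nil => simp [insertRow] at h
  | cons x s ih =>
    by_cases hax : a < x
    · simp only [insertRow, if_pos hax, Option.some.injEq] at h
      exact h ▸ hax
    · simp only [insertRow, if_neg hax] at h
      exact ih h

theorem length_insertRow (r : List ℕ) (a : ℕ) :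
    (insertRow r a).1.length + (insertRow r a).2.toList.length = r.length + 1 := by
  induction r with
  | nil => rfl
  | cons x s ih =>
    by_cases hax : a < x
    · simp [insertRow, hax]
    · simp only [insertRow, if_neg hax, List.length_cons]
      omega

theorem mem_insertRow {r : List ℕ} {a y : ℕ} (hy : y ∈ (insertRow r a).1) :
    y ∈ r ∨ y = a := by
  induction r with
  | nil => simpa [insertRow] using hy
  | cons x s ih =>
    by_cases hax : a < x
    · simp only [insertRow, if_pos hax, List.mem_cons] at hy ⊢
      tauto
    · simp only [insertRow, if_neg hax, List.mem_cons] at hy ⊢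
      rcases hy with hy | hy
      · exact .inl (.inl hy)
      · exact (ih hy).imp_left .inr

theorem mem_insertWord {r w : List ℕ} {y : ℕ} (hy : y ∈ (insertWord r w).1) :
    y ∈ r ∨ y ∈ w := by
  induction w generalizing r with
  | nil => exact .inl hy
  | cons a w ih =>
    rcases ih hy with h | h
    · rcases mem_insertRow h with h | rfl
      · exact .inl h
      · exact .inr List.mem_cons_self
    · exact .inr (List.mem_cons_of_mem a h)

theorem rowAbove_insertRow_of_snd_eq_some {r : List ℕ} {a b : ℕ}
    (h : (insertRow r a).2 = some b) : RowAbove (· ≤ ·) (insertRow r a).1 r := by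
  induction r with
  | nil => simp [insertRow] at h
  | cons x s ih =>
    by_cases hax : a < x
    · simp only [insertRow, if_pos hax]
      exact .cons hax.le (.refl le_refl s)
    · simp only [insertRow, if_neg hax] at h ⊢
      exact .cons le_rfl (ih h)

theorem RowAbove.insertRow_of_snd_eq_none {r s : List ℕ} {a : ℕ} (hrs : RowAbove (· < ·) r s)
    (h : (insertRow r a).2 = none) : RowAbove (· < ·) (insertRow r a).1 s := by
  rw [insertRow_fst_eq_append h]
  exact hrs.append_right _

/-- Schensted's bumping lemma. -/
theorem RowAbove.insertRow_of_snd_eq_some {r s : List ℕ} {a b : ℕ}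
    (hrs : RowAbove (· < ·) r s) (h : (insertRow r a).2 = some b) :
    RowAbove (· < ·) (insertRow r a).1 (insertRow s b).1 := by
  induction r generalizing s with
  | nil => simp [insertRow] at h
  | cons x r ih =>
    by_cases hax : a < x
    · simp only [insertRow, if_pos hax, Option.some.injEq] at h ⊢
      subst h
      cases hrs with
      | nil => exact .cons hax (.nil _)
      | cons hxy hrs =>
        simp only [insertRow, if_pos hxy]
        exact .cons hax hrs
    · simp only [insertRow, if_neg hax] at h ⊢
      have hxb : x < b := (not_lt.mp hax).trans_lt (lt_of_insertRow_snd_eq_some h)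
      cases hrs with
      | nil => exact .cons hxb (.nil _)
      | @cons _ y _ s hxy hrs =>
        by_cases hby : b < y
        · simp only [insertRow, if_pos hby]
          exact .cons hxb <|
            (rowAbove_insertRow_of_snd_eq_some h).trans hrs fun _ _ _ => lt_of_le_of_lt
        · simp only [insertRow, if_neg hby]
          exact .cons hxy (ih hrs h)

theorem head?_rowInsertOne (T : List (List ℕ)) (a : ℕ) :
    (rowInsertOne T a).head? = some (insertRow (T.headD []) a).1 := by
  cases T with
  | nil => rfl
  | cons r rest => rw [rowInsertOne_cons]; rfl

theorem isChain_rowInsertOne {T : List (List ℕ)} (hT : T.IsChain (RowAbove (· < ·))) (a : ℕ) :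
    (rowInsertOne T a).IsChain (RowAbove (· < ·)) := by
  induction T generalizing a with
  | nil => exact .singleton _
  | cons r rest ih =>
    rw [List.isChain_cons] at hT
    have hr : RowAbove (· < ·) r (rest.headD []) := by
      cases rest with
      | nil => exact .nil _
      | cons s _ => exact hT.1 s rfl
    rw [rowInsertOne_cons, List.isChain_cons]
    cases hb : (insertRow r a).2 with
    | none => exact ⟨fun s hs => (hT.1 s hs).insertRow_of_snd_eq_none hb, hT.2⟩
    | some b =>
      refine ⟨fun s hs => ?_, ih hT.2 b⟩
      rw [Option.elim_some, head?_rowInsertOne, Option.mem_some_iff] at hs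
      exact hs ▸ hr.insertRow_of_snd_eq_some hb

theorem isChain_rowInsertWord {T : List (List ℕ)} (hT : T.IsChain (RowAbove (· < ·)))
    (w : List ℕ) : (rowInsertWord T w).IsChain (RowAbove (· < ·)) := by
  induction w generalizing T with
  | nil => exact hT
  | cons a w ih => exact ih (isChain_rowInsertOne hT a)

theorem length_le_of_mem_rowInsertWord {T : List (List ℕ)} (hT : T.IsChain (RowAbove (· < ·)))
    {w r : List ℕ} (hr : r ∈ rowInsertWord T w) :
    r.length ≤ (insertWord (T.headD []) w).1.length := by
  have key : ∀ {r₀ rest}, (r₀ :: rest).IsChain (RowAbove (· < ·)) →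
      r ∈ rowInsertWord (r₀ :: rest) w → r.length ≤ (insertWord r₀ w).1.length := by
    intro r₀ rest hT hr
    have hP := isChain_rowInsertWord hT w
    rw [rowInsertWord_cons] at hP hr
    exact length_le_head_of_isChain hP r hr
  match T, w, hT, hr with
  | [], [], _, hr => simp [rowInsertWord] at hr
  | [], _ :: _, _, hr => exact key (.singleton []) hr
  | _ :: _, _, hT, hr => exact key hT hr

theorem sum_length_rowInsertOne (T : List (List ℕ)) (a : ℕ) :
    ((rowInsertOne T a).map List.length).sum = (T.map List.length).sum + 1 := by
  induction T generalizing a with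
  | nil => rfl
  | cons r rest ih =>
    have hlen := length_insertRow r a
    rw [rowInsertOne_cons]
    cases hb : (insertRow r a).2 with
    | none =>
      simp only [hb, Option.toList_none, List.length_nil, Option.elim_none, List.map_cons,
        List.sum_cons] at hlen ⊢
      omega
    | some b =>
      simp only [hb, Option.toList_some, List.length_singleton, Option.elim_some, List.map_cons,
        List.sum_cons, ih] at hlen ⊢
      omega

theorem sum_length_rowInsertWord (T : List (List ℕ)) (w : List ℕ) :
    ((rowInsertWord T w).map List.length).sum = (T.map List.length).sum + w.length := by
  induction w generalizing T with
  | nil => rfl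
  | cons a w ih =>
    rw [rowInsertWord, List.foldl_cons, ← rowInsertWord, ih, sum_length_rowInsertOne,
      List.length_cons]
    ring

theorem insertRow_eq_cons_of_rowAbove_tail {r f : List ℕ} {a : ℕ} (hf : ∀ b ∈ f, a ≤ b)
    (hr : RowAbove (· < ·) (a :: f) r.tail) :
    ∃ x s, (insertRow r a).1 = x :: s ∧ x ≤ a ∧ RowAbove (· < ·) f s.tail ∧
      ∀ y ∈ s, a ≤ y := by
  have haf : ∀ b ∈ a :: f, a ≤ b := by simpa using hf
  match r, hr with
  | [], _ => exact ⟨a, [], rfl, le_rfl, .nil _, by simp⟩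
  | x :: t, hr =>
    by_cases hax : a < x
    · refine ⟨a, t, by simp [insertRow, hax], le_rfl, ?_, hr.le_of_mem haf⟩
      cases hr with
      | nil => exact .nil _
      | cons _ h => exact h
    · cases hr with
      | nil => exact ⟨x, [a], by simp [insertRow, hax], not_lt.mp hax, .nil _, by simp⟩
      | @cons _ y _ t hay h =>
        refine ⟨x, a :: t, by simp [insertRow, hax, hay], not_lt.mp hax, h, ?_⟩
        simpa using h.le_of_mem hf

theorem rowAbove_insertWord_tail {f r : List ℕ} (hf : f.Pairwise (· ≤ ·))
    (hr : RowAbove (· < ·) f r.tail) : RowAbove (· ≤ ·) f (insertWord r f).1.tail := by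
  induction f generalizing r with
  | nil =>
    have hnil : r.tail = [] := List.length_eq_zero_iff.mp (Nat.le_zero.mp hr.length_le)
    show RowAbove _ [] r.tail
    rw [hnil]
    exact .nil []
  | cons a f ih =>
    rw [List.pairwise_cons] at hf
    obtain ⟨x, s, hrow, hxa, hs, hsa⟩ := insertRow_eq_cons_of_rowAbove_tail hf.1 hr
    show RowAbove _ (a :: f) (insertWord (insertRow r a).1 f).1.tail
    rw [hrow, insertWord_cons_of_le (fun b hb => hxa.trans (hf.1 b hb)), List.tail_cons]
    have htail := ih hf.2 hs
    cases h : (insertWord s f).1 with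
    | nil => exact .nil _
    | cons y t =>
      rw [h, List.tail_cons] at htail
      have hay : a ≤ y := by
        rcases mem_insertWord (h ▸ List.mem_cons_self : y ∈ (insertWord s f).1) with hy | hy
        · exact hsa y hy
        · exact hf.1 y hy
      exact .cons hay htail

theorem rowAbove_insertWord_flatten_reverse_tail {f r : List ℕ} {R : List (List ℕ)}
    (hR : (f :: R).IsChain (RowAbove (· < ·)))
    (hsorted : ∀ g ∈ f :: R, g.Pairwise (· ≤ ·))
    (hr : r.tail = []) : RowAbove (· ≤ ·) f (insertWord r (f :: R).reverse.flatten).1.tail := by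
  induction R generalizing f with
  | nil => simpa using rowAbove_insertWord_tail (hsorted f (by simp)) (hr ▸ .nil f)
  | cons g R ih =>
    rw [List.isChain_cons_cons] at hR
    have hg := ih hR.2 (fun h hh => hsorted h (List.mem_cons_of_mem f hh))
    rw [List.reverse_cons, List.flatten_append, insertWord_append]
    simpa using rowAbove_insertWord_tail (hsorted f (by simp))
      (hR.1.trans hg fun _ _ _ => lt_of_lt_of_le)

theorem length_insertWord_flatten_reverse_le {R : List (List ℕ)} {L : ℕ}
    (hR : R.IsChain (RowAbove (· < ·))) (hsorted : ∀ g ∈ R, g.Pairwise (· ≤ ·))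
    (hlen : ∀ g ∈ R, g.length = L) {r : List ℕ} (hr : r.length ≤ 1) :
    (insertWord r R.reverse.flatten).1.length ≤ L + 1 := by
  cases R with
  | nil => show r.length ≤ L + 1; omega
  | cons f R =>
    have htail : r.tail = [] := List.length_eq_zero_iff.mp (by rw [List.length_tail]; omega)
    have h := (rowAbove_insertWord_flatten_reverse_tail hR hsorted htail).length_le
    rw [List.length_tail, hlen f List.mem_cons_self] at h
    omega

theorem insertWord_eq_of_rowAbove {f g : List ℕ} (hf : f.Pairwise (· ≤ ·))
    (hfg : RowAbove (· < ·) f g) : insertWord g f = (f, g) := by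
  induction f generalizing g with
  | nil => cases hfg; rfl
  | cons a f ih =>
    rw [List.pairwise_cons] at hf
    cases hfg with
    | nil =>
      show ((insertWord [a] f).1, [] ++ (insertWord [a] f).2) = (a :: f, [])
      rw [insertWord_cons_of_le hf.1, ih hf.2 (.nil _)]
      rfl
    | cons hab hfg =>
      simp only [insertWord, insertRow, if_pos hab]
      rw [insertWord_cons_of_le hf.1, ih hf.2 hfg]
      rfl

theorem insertWord_singleton_flatten_reverse {a : ℕ} {s : List ℕ} {S : List (List ℕ)}
    (hS : (s :: S).IsChain (RowAbove (· < ·)))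
    (hsorted : ∀ t ∈ s :: S, t.Pairwise (· ≤ ·))
    (ha : ∀ t ∈ s :: S, ∀ y ∈ t, a ≤ y) :
    insertWord [a] (s :: S).reverse.flatten = (a :: s, S.reverse.flatten) := by
  induction S generalizing s with
  | nil =>
    simp only [List.reverse_singleton, List.flatten_cons, List.flatten_nil, List.append_nil]
    rw [insertWord_cons_of_le (ha s List.mem_cons_self),
      insertWord_eq_of_rowAbove (hsorted s List.mem_cons_self) (.nil _)]
    rfl
  | cons t S ih =>
    rw [List.isChain_cons_cons] at hS
    rw [List.reverse_cons, List.flatten_append, insertWord_append,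
      ih hS.2 (fun u hu => hsorted u (List.mem_cons_of_mem s hu))
        (fun u hu => ha u (List.mem_cons_of_mem s hu))]
    dsimp only
    rw [List.flatten_singleton, insertWord_cons_of_le (ha s List.mem_cons_self),
      insertWord_eq_of_rowAbove (hsorted s List.mem_cons_self) hS.1]
    simp

theorem rowInsertWord_column {as : List ℕ} {R : List (List ℕ)}
    (hR : R.IsChain (RowAbove (· < ·))) (hsorted : ∀ r ∈ R, r.Pairwise (· ≤ ·))
    (has : List.Forall₂ (fun a r => ∀ y ∈ r, a ≤ y) as R) :
    rowInsertWord (as.map fun a => [a]) R.reverse.flatten = List.zipWith List.cons as R := by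
  induction has with
  | nil => rfl
  | @cons a r as R har _ ih =>
    rw [List.map_cons, rowInsertWord_cons,
      insertWord_singleton_flatten_reverse hR hsorted (le_of_mem_of_isChain hR har),
      List.zipWith_cons_cons, ih hR.tail (fun t ht => hsorted t (List.mem_cons_of_mem r ht))]

theorem eastCount_le {T : List (List ℕ)} {L K : ℕ} (hT : ∀ r ∈ T, r.length ≤ L + 1)
    (hsum : (T.map List.length).sum = K * (L + 1)) : eastCount T L ≤ K := by
  have h : eastCount T L * (L + 1) ≤ K * (L + 1) := by
    rw [← hsum, eastCount, ← List.sum_map_mul_right]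
    refine List.sum_le_sum fun r hr => ?_
    obtain h | h : r.length ≤ L ∨ r.length = L + 1 := by have := hT r hr; omega
    · simp [Nat.sub_eq_zero_of_le h]
    · simp [h]
  exact Nat.le_of_mul_le_mul_right h (Nat.succ_pos L)

theorem eastCount_of_length_eq {T : List (List ℕ)} {L : ℕ}
    (hT : ∀ r ∈ T, r.length = L + 1) :
    eastCount T L = T.length := by
  rw [eastCount, List.map_congr_left (g := fun _ => 1) fun r hr => by simp [hT r hr]]
  simp

section RectTableau

variable {n k l : ℕ}

theorem add_one_le_entry (x : RectTableau n k l) (i : Fin k) (j : Fin l) :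
    i.1 + 1 ≤ x.entry i j := by
  obtain ⟨i, hi⟩ := i
  induction i with
  | zero => exact x.entry_pos _ j
  | succ i ih =>
    exact (ih (by omega)).trans_lt (x.col_strict j (Fin.mk_lt_mk.mpr (Nat.lt_succ_self i)))

theorem isChain_toRows (x : RectTableau n k l) : (toRows x).IsChain (RowAbove (· < ·)) := by
  refine List.Pairwise.isChain ?_
  rw [toRows, List.pairwise_map]
  refine (List.pairwise_lt_finRange k).imp fun hii' => RowAbove.of_forall₂ ?_
  simpa [List.forall₂_map_left_iff, List.forall₂_map_right_iff, List.forall₂_same] using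
    fun j => x.col_strict j hii'

theorem pairwise_of_mem_toRows {x : RectTableau n k l} {r : List ℕ} (hr : r ∈ toRows x) :
    r.Pairwise (· ≤ ·) := by
  obtain ⟨i, -, rfl⟩ := List.mem_map.mp hr
  rw [List.pairwise_map]
  exact (List.pairwise_le_finRange l).imp fun h => x.row_mono i h

theorem length_of_mem_toRows {x : RectTableau n k l} {r : List ℕ} (hr : r ∈ toRows x) :
    r.length = l := by
  obtain ⟨i, -, rfl⟩ := List.mem_map.mp hr
  simp

theorem length_headD_toRows_le (b : RectTableau n k 1) : ((toRows b).headD []).length ≤ 1 := by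
  cases h : toRows b with
  | nil => simp
  | cons r _ => exact (length_of_mem_toRows (h ▸ List.mem_cons_self : r ∈ toRows b)).le

theorem rowWord_eq_flatten (x : RectTableau n k l) : rowWord x = (toRows x).reverse.flatten := by
  rw [rowWord, toRows, List.flatMap_def, List.map_reverse]

theorem sum_length_toRows (x : RectTableau n k l) : ((toRows x).map List.length).sum = k * l := by
  simp [toRows, Function.comp_def]

theorem length_rowWord (x : RectTableau n k l) : (rowWord x).length = k * l := by
  simp [rowWord_eq_flatten, List.length_flatten, ← sum_length_toRows x]

theorem toRows_constTab (h : k ≤ n) :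
    toRows (constTab n k 1 h) = ((List.finRange k).map fun i => i.1 + 1).map fun a => [a] := by
  simp [toRows, constTab]

theorem energyH_eq (hl : 1 ≤ l) (c : RectTableau n k l) (b : RectTableau n k 1) :
    energyH c b = eastCount (rowInsertWord (toRows b) (rowWord c)) l - k := by
  simp [energyH, max_eq_left hl, min_eq_right (Nat.one_le_cast.mpr hl : (1 : ℤ) ≤ l)]

theorem energyH_nonpos (hl : 1 ≤ l) (c : RectTableau n k l) (b : RectTableau n k 1) :
    energyH c b ≤ 0 := by
  have hrows : ∀ r ∈ rowInsertWord (toRows b) (rowWord c), r.length ≤ l + 1 := fun r hr =>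
    (length_le_of_mem_rowInsertWord (isChain_toRows b) hr).trans <| by
      rw [rowWord_eq_flatten]
      exact length_insertWord_flatten_reverse_le (isChain_toRows c)
        (fun _ => pairwise_of_mem_toRows) (fun _ => length_of_mem_toRows)
        (length_headD_toRows_le b)
  have hsum : ((rowInsertWord (toRows b) (rowWord c)).map List.length).sum = k * (l + 1) := by
    rw [sum_length_rowInsertWord, sum_length_toRows, length_rowWord]
    ring
  have := eastCount_le hrows hsum
  rw [energyH_eq hl]
  omega

theorem energyH_constTab (hl : 1 ≤ l) (h : k ≤ n) (c : RectTableau n k l) :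
    energyH c (constTab n k 1 h) = 0 := by
  have hcol : List.Forall₂ (fun a r => ∀ y ∈ r, a ≤ y)
      ((List.finRange k).map fun i => i.1 + 1) (toRows c) := by
    simpa [toRows, List.forall₂_map_left_iff, List.forall₂_map_right_iff, List.forall₂_same]
      using add_one_le_entry c
  rw [energyH_eq hl, toRows_constTab, rowWord_eq_flatten,
    rowInsertWord_column (isChain_toRows c) (fun _ => pairwise_of_mem_toRows) hcol,
    eastCount_of_length_eq]
  · simp [toRows]
  · intro r hr
    simp only [toRows, List.zipWith_map, List.zipWith_self, List.mem_map] at hr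
    obtain ⟨i, -, rfl⟩ := hr
    simp

theorem energySum_append (c : RectTableau n k l) (p p' : List (RectTableau n k 1)) :
    energySum c (p ++ p') = energySum c p + energySum (carrierPass c p).2 p' := by
  induction p generalizing c with
  | nil => simp [energySum, carrierPass]
  | cons b p ih => simp [energySum, carrierPass, ih, add_assoc]

theorem energySum_nonpos (hl : 1 ≤ l) (c : RectTableau n k l) (p : List (RectTableau n k 1)) :
    energySum c p ≤ 0 := by
  induction p generalizing c with
  | nil => exact le_rfl
  | cons b p ih => exact add_nonpos (energyH_nonpos hl c b) (ih _)

theorem energySum_replicate_constTab (hl : 1 ≤ l) (h : k ≤ n) (c : RectTableau n k l)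
    (m : ℕ) :
    energySum c (List.replicate m (constTab n k 1 h)) = 0 := by
  induction m generalizing c with
  | zero => rfl
  | succ m ih => rw [List.replicate_succ, energySum, energyH_constTab hl, ih, add_zero]

theorem bbsE_append_replicate_constTab (hl : 1 ≤ l) (h : k ≤ n) (q : List (RectTableau n k 1))
    (m : ℕ) : bbsE h l (q ++ List.replicate m (constTab n k 1 h)) = bbsE h l q := by
  rw [bbsE, bbsE, energySum_append, energySum_replicate_constTab hl, add_zero]

end RectTableau

end BBS

open BBS in
theorem energy_nonneg_indep_general {n k : ℕ} (hkn : k < n)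
    (l : ℕ) (hl : 1 ≤ l) (q : List (RectTableau n k 1)) :
    ∃ N : ℕ, ∀ m : ℕ, N ≤ m →
      bbsE hkn.le l (q ++ List.replicate m (constTab n k 1 hkn.le))
          = bbsE hkn.le l (q ++ List.replicate N (constTab n k 1 hkn.le)) ∧
      0 ≤ bbsE hkn.le l (q ++ List.replicate m (constTab n k 1 hkn.le)) := by
  refine ⟨0, fun m _ => ?_⟩
  rw [bbsE_append_replicate_constTab hl, bbsE_append_replicate_constTab hl]
  exact ⟨rfl, neg_nonneg.mpr (energySum_nonpos hl _ q)⟩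

open BBS in
/-- for a state `p`, the quantity `E_l(p) = -∑_j H(b^{(j-1)} ⊗ b_j)` is a
nonnegative integer and is independent of the system size `L` (for `L` sufficiently large
compared with the support of `p`). -/
theorem energy_nonneg_indep {n k : ℕ} (hn : 2 ≤ n) (hk : 1 ≤ k) (hkn : k < n)
    (l : ℕ) (hl : 1 ≤ l) (q : List (RectTableau n k 1)) :
    ∃ N : ℕ, ∀ m : ℕ, N ≤ m →
      bbsE hkn.le l (q ++ List.replicate m (constTab n k 1 hkn.le))
          = bbsE hkn.le l (q ++ List.replicate N (constTab n k 1 hkn.le)) ∧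
      0 ≤ bbsE hkn.le l (q ++ List.replicate m (constTab n k 1 hkn.le)) :=
  energy_nonneg_indep_general hkn l hl q
end

section
/- The highest weight elements among two soliton states in (B^{k,1})^{⊗L} — i.e., two soliton states p with e_i p = 0 for all i ∈ I \ {0,k} — are exactly the states p̃ = [𝟎]^{⊗c_1} ⊗ [𝟏]^{⊗d_1} ⊗ [𝟎]^{⊗(c_2−c_1−d_1)} ⊗ [𝟑]^{⊗α} ⊗ [𝟐_±]^{⊗(d_2−α−β)} ⊗ [𝟏]^{⊗β} ⊗ [𝟎]^{⊗(L−c_2−d_2)} with 0 ≤ α + β ≤ d_2. -/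
namespace BBS

open scoped Classical

variable {n k l k' l' d d1 d2 : ℕ}

/-!
By the signature rule, `e_i p = 0` exactly when no `-` survives after cancelling `+-` pairs in
the signs of the columns of `p`; a column is strictly increasing, so it contributes at most one
net sign. For `i ≠ k` the vacuum column `[𝟎]` is neutral, so the first column of the leading
soliton may carry no `-` at all: its top `k-1` entries are then `1,…,k-1` and its bottom entry is
`k+1`, and since entries decrease along a soliton, the whole soliton is `[𝟏]^{d₁}`. Now `[𝟏]`
carries a `+` only for `i = k ± 1`, so for every other `i` the first column of the second soliton
carries no `-`, which leaves only the columns `(1,…,k-2,m,b)ᵗ` with `m ∈ {k-1,k}` and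
`b ∈ {k+1,k+2}`; as `m` and `b` decrease along the soliton, it has the stated shape.
Conversely, in such a state only `i = k ± 1` produces `-`'s, at most `d₂ < d₁` of them, all
cancelled by the `d₁` pluses of the leading soliton.
-/

/-- The state `(m, q)` stands for the reduced signature `-^m +^q`; `some true` is a `+`
(letter `i`), `some false` a `-` (letter `i+1`) and `none` a neutral letter. -/
def sgnStep : ℕ × ℕ → Option Bool → ℕ × ℕ
  | st, none => st
  | (m, q), some true => (m, q + 1)
  | (m, 0), some false => (m + 1, 0)
  | (m, q + 1), some false => (m, q)

lemma fst_le_foldl_sgnStep (σ : List (Option Bool)) (st : ℕ × ℕ) :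
    st.1 ≤ (σ.foldl sgnStep st).1 := by
  induction σ generalizing st with
  | nil => exact le_rfl
  | cons o σ ih =>
    refine le_trans ?_ (ih _)
    rcases st with ⟨m, _ | q⟩ <;> rcases o with _ | _ | _ <;> simp [sgnStep]

lemma foldl_sgnStep_fst_eq_zero (σ : List (Option Bool)) (q : ℕ)
    (h : σ.count (some false) ≤ q) : (σ.foldl sgnStep (0, q)).1 = 0 := by
  induction σ generalizing q with
  | nil => rfl
  | cons o σ ih =>
    rcases o with _ | _ | _
    · exact ih q (by simpa using h)
    · simp only [List.count_cons_self] at h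
      obtain ⟨q, rfl⟩ : ∃ q', q = q' + 1 := ⟨q - 1, by omega⟩
      exact ih q (by omega)
    · exact ih (q + 1) (by simpa using h.trans q.le_succ)

lemma foldl_sgnStep_of_forall_ne_minus {σ : List (Option Bool)} (h : some false ∉ σ)
    (st : ℕ × ℕ) : σ.foldl sgnStep st = (st.1, st.2 + σ.count (some true)) := by
  induction σ generalizing st with
  | nil => rfl
  | cons o σ ih =>
    rw [List.mem_cons, not_or] at h
    rcases st with ⟨m, q⟩
    rcases o with _ | _ | _
    · simp [sgnStep, ih h.2]
    · exact absurd rfl h.1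
    · simp only [List.foldl_cons, sgnStep, ih h.2, List.count_cons_self, Prod.mk.injEq, true_and]
      omega

lemma foldl_sgnStep_append_fst_eq_zero {A B : List (Option Bool)} (hA : some false ∉ A)
    (hB : B.count (some false) ≤ A.count (some true)) :
    ((A ++ B).foldl sgnStep (0, 0)).1 = 0 := by
  rw [List.foldl_append, foldl_sgnStep_of_forall_ne_minus hA, zero_add]
  exact foldl_sgnStep_fst_eq_zero B _ hB

lemma foldl_sgnStep_append_cons_fst_ne_zero {A : List (Option Bool)} (hA : ∀ o ∈ A, o = none)
    (C : List (Option Bool)) : ((A ++ some false :: C).foldl sgnStep (0, 0)).1 ≠ 0 := by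
  have hA' : some false ∉ A := fun h => by simpa using hA _ h
  have hcount : A.count (some true) = 0 := List.count_eq_zero.mpr fun h => by simpa using hA _ h
  rw [List.foldl_append, foldl_sgnStep_of_forall_ne_minus hA', hcount, List.foldl_cons]
  exact Nat.pos_iff_ne_zero.mp (fst_le_foldl_sgnStep C (1, 0))

def letterSgn (i a : ℕ) : Option Bool :=
  if a = i then some true else if a = i + 1 then some false else none

def sigUnpairedStep (i : ℕ) (mp : List ℕ × List ℕ) (x : ℕ × ℕ) : List ℕ × List ℕ :=
  if x.2 = i then (mp.1, x.1 :: mp.2)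
  else if x.2 = i + 1 then
    match mp.2 with
    | [] => (mp.1 ++ [x.1], [])
    | _ :: rest => (mp.1, rest)
  else mp

lemma sigUnpaired_eq_foldl (i : ℕ) (w : List ℕ) :
    sigUnpaired i w = (w.zipIdx.map Prod.swap).foldl (sigUnpairedStep i) ([], []) := rfl

lemma length_foldl_sigUnpairedStep (i : ℕ) (L : List (ℕ × ℕ)) (st : List ℕ × List ℕ) :
    ((L.foldl (sigUnpairedStep i) st).1.length, (L.foldl (sigUnpairedStep i) st).2.length)
      = (L.map (letterSgn i ∘ Prod.snd)).foldl sgnStep (st.1.length, st.2.length) := by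
  induction L generalizing st with
  | nil => rfl
  | cons x L ih =>
    rw [List.foldl_cons, List.map_cons, List.foldl_cons, ih]
    congr 1
    rcases st with ⟨ms, _ | ⟨p, ps⟩⟩ <;>
      by_cases h1 : x.2 = i <;> by_cases h2 : x.2 = i + 1 <;>
      simp [sigUnpairedStep, letterSgn, sgnStep, h1, h2]

lemma eWord_eq_none_iff (i : ℕ) (w : List ℕ) :
    eWord i w = none ↔ ((w.map (letterSgn i)).foldl sgnStep (0, 0)).1 = 0 := by
  have hlen := congrArg Prod.fst (length_foldl_sigUnpairedStep i (w.zipIdx.map Prod.swap) ([], []))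
  simp only [List.map_map, List.length_nil] at hlen
  have hw : (letterSgn i ∘ Prod.snd) ∘ Prod.swap = letterSgn i ∘ (Prod.fst : ℕ × ℕ → ℕ) := rfl
  rw [hw, ← List.map_map, List.zipIdx_map_fst] at hlen
  rw [← hlen, ← sigUnpaired_eq_foldl, List.length_eq_zero_iff, ← List.getLast?_eq_none_iff]
  unfold eWord
  split <;> simp_all

lemma mem_foldl_sigUnpairedStep_fst {i q : ℕ} (L : List (ℕ × ℕ)) (st : List ℕ × List ℕ)
    (h : q ∈ (L.foldl (sigUnpairedStep i) st).1) : q ∈ st.1 ∨ (q, i + 1) ∈ L := by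
  induction L generalizing st with
  | nil => exact Or.inl h
  | cons x L ih =>
    rcases ih _ h with h | h
    · unfold sigUnpairedStep at h
      split_ifs at h with h1 h2
      · exact Or.inl h
      · split at h
        · rcases List.mem_append.mp h with h | h
          · exact Or.inl h
          · exact Or.inr (List.mem_cons.mpr (Or.inl (Prod.ext (List.mem_singleton.mp h) h2.symm)))
        · exact Or.inl h
      · exact Or.inl h
    · exact Or.inr (List.mem_cons_of_mem _ h)

lemma getElem?_of_mem_sigUnpaired_fst {i q : ℕ} {w : List ℕ} (h : q ∈ (sigUnpaired i w).1) :
    w[q]? = some (i + 1) := by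
  rcases mem_foldl_sigUnpairedStep_fst _ _ h with h | h
  · simp at h
  · obtain ⟨⟨a, b⟩, hx, hab⟩ := List.mem_map.mp h
    obtain ⟨rfl, rfl⟩ := Prod.mk.inj hab
    exact List.mem_zipIdx_iff_getElem?.mp hx

lemma succ_not_mem_sigUnpaired_fst {i q : ℕ} {w : List ℕ} (h : w[q]? = some i) :
    q + 1 ∉ (sigUnpaired i w).1 := by
  intro hmem
  obtain ⟨hq, hnext⟩ := List.getElem?_eq_some_iff.mp (getElem?_of_mem_sigUnpaired_fst hmem)
  obtain ⟨_, hcur⟩ := List.getElem?_eq_some_iff.mp h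
  have hu : (w.take q).length = q := List.length_take_of_le (by omega)
  have hw : w = w.take q ++ i :: (i + 1) :: w.drop (q + 2) := by
    conv_lhs => rw [← List.take_append_drop q w]
    rw [List.drop_eq_getElem_cons (by omega), List.drop_eq_getElem_cons hq, hcur, hnext]
  rw [hw, sigUnpaired_eq_foldl, List.zipIdx_append, List.map_append, List.foldl_append] at hmem
  simp only [List.zipIdx_cons, List.map_cons, Prod.swap_prod_mk, List.foldl_cons, hu] at hmem
  -- the `+` pushed at position `q` is popped by the `-` at `q + 1`
  simp only [sigUnpairedStep, if_pos, if_neg (Nat.succ_ne_self i)] at hmem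
  rcases mem_foldl_sigUnpairedStep_fst _ _ hmem with h | h
  · rcases mem_foldl_sigUnpairedStep_fst _ _ h with h | h
    · simp at h
    · obtain ⟨⟨a, b⟩, hx, hab⟩ := List.mem_map.mp h
      obtain ⟨rfl, rfl⟩ := Prod.mk.inj hab
      have := List.snd_lt_add_of_mem_zipIdx hx
      omega
  · obtain ⟨⟨a, b⟩, hx, hab⟩ := List.mem_map.mp h
    obtain ⟨rfl, rfl⟩ := Prod.mk.inj hab
    have := List.le_snd_of_mem_zipIdx hx
    omega

/-- The entry in row `r` (counted from `0` at the top) of a column, and `0` below the column. -/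
def colEntry (c : RectTableau n k 1) (r : ℕ) : ℕ :=
  if h : r < k then c.entry ⟨r, h⟩ 0 else 0

lemma colEntry_of_lt (c : RectTableau n k 1) {r : ℕ} (h : r < k) :
    colEntry c r = c.entry ⟨r, h⟩ 0 := dif_pos h

lemma entry_eq_colEntry (c : RectTableau n k 1) (r : Fin k) (t : Fin 1) :
    c.entry r t = colEntry c r := by
  rw [Subsingleton.elim t 0, colEntry_of_lt c r.2]

lemma ext_colEntry {c c' : RectTableau n k 1} (h : ∀ r < k, colEntry c r = colEntry c' r) :
    c = c' := by
  obtain ⟨e, _, _, _, _⟩ := c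
  obtain ⟨e', _, _, _, _⟩ := c'
  congr
  funext r t
  have := h r r.2
  rwa [← entry_eq_colEntry _ r t, ← entry_eq_colEntry _ r t] at this

lemma colEntry_lt_colEntry (c : RectTableau n k 1) {r s : ℕ} (hrs : r < s) (hs : s < k) :
    colEntry c r < colEntry c s := by
  rw [colEntry_of_lt c (hrs.trans hs), colEntry_of_lt c hs]
  exact c.col_strict 0 (show (⟨r, _⟩ : Fin k) < ⟨s, hs⟩ from hrs)

lemma colEntry_le_colEntry (c : RectTableau n k 1) {r s : ℕ} (hrs : r ≤ s) (hs : s < k) :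
    colEntry c r ≤ colEntry c s := by
  rcases hrs.lt_or_eq with h | rfl
  · exact (colEntry_lt_colEntry c h hs).le
  · exact le_rfl

lemma succ_le_colEntry (c : RectTableau n k 1) {r : ℕ} (hr : r < k) : r + 1 ≤ colEntry c r := by
  induction r with
  | zero => rw [colEntry_of_lt c hr]; exact c.entry_pos _ _
  | succ r ih =>
    have := colEntry_lt_colEntry c (Nat.lt_add_one r) hr
    have := ih (by omega)
    omega

lemma colEntry_le (c : RectTableau n k 1) (r : ℕ) : colEntry c r ≤ n := by
  unfold colEntry
  split
  · exact c.entry_le _ _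
  · exact Nat.zero_le n

lemma sigWord_eq_ofFn (c : RectTableau n k 1) :
    sigWord c = List.ofFn fun r : Fin k => colEntry c r := by
  simp [sigWord, List.ofFn_eq_map, entry_eq_colEntry, show List.finRange 1 = [0] from rfl]

lemma length_sigWord (c : RectTableau n k 1) : (sigWord c).length = k := by
  simp [sigWord_eq_ofFn]

lemma getElem_sigWord (c : RectTableau n k 1) {r : ℕ} (h : r < (sigWord c).length) :
    (sigWord c)[r] = colEntry c r := by
  simp [sigWord_eq_ofFn]

lemma getElem?_sigWord (c : RectTableau n k 1) {r : ℕ} (h : r < k) :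
    (sigWord c)[r]? = some (colEntry c r) := by
  simp [sigWord_eq_ofFn, h]

lemma mem_sigWord_iff {c : RectTableau n k 1} {x : ℕ} :
    x ∈ sigWord c ↔ ∃ r < k, colEntry c r = x := by
  simp [sigWord_eq_ofFn, List.mem_ofFn, Fin.exists_iff]

lemma pairwise_sigWord (c : RectTableau n k 1) : (sigWord c).Pairwise (· < ·) := by
  rw [sigWord_eq_ofFn, List.pairwise_ofFn]
  intro r s hrs
  exact colEntry_lt_colEntry c hrs s.2

lemma exists_sigWord_eq {w : List ℕ} (hlen : w.length = k) (hw : w.Pairwise (· < ·))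
    (hbound : ∀ x ∈ w, 1 ≤ x ∧ x ≤ n) : ∃ c : RectTableau n k 1, sigWord c = w := by
  subst hlen
  refine ⟨⟨fun r _ => w[r], fun r _ => (hbound _ (List.getElem_mem _)).1,
    fun r _ => (hbound _ (List.getElem_mem _)).2, fun _ => monotone_const,
    fun _ _ _ h => List.pairwise_iff_getElem.mp hw _ _ _ _ h⟩, ?_⟩
  rw [sigWord_eq_ofFn]
  conv_rhs => rw [← List.ofFn_getElem (xs := w)]
  congr 1
  funext r
  rw [colEntry_of_lt _ r.2]
  rfl

lemma exists_sigWord_eq_set {i r : ℕ} (hi : 1 ≤ i) (c : RectTableau n k 1)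
    (hr : (sigWord c)[r]? = some (i + 1)) (hprev : r ≠ 0 → (sigWord c)[r - 1]? ≠ some i) :
    ∃ c' : RectTableau n k 1, sigWord c' = (sigWord c).set r i := by
  have hrk : r < k := by simpa [length_sigWord] using (List.getElem?_eq_some_iff.mp hr).1
  rw [getElem?_sigWord c hrk, Option.some_inj] at hr
  have habove : ∀ s < r, colEntry c s < i := by
    intro s hs
    have h1 := colEntry_le_colEntry c (show s ≤ r - 1 by omega) (by omega)
    have h2 := colEntry_lt_colEntry c (show r - 1 < r by omega) hrk
    have h3 : colEntry c (r - 1) ≠ i := fun h =>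
      hprev (by omega) (by rw [getElem?_sigWord c (by omega), h])
    omega
  apply exists_sigWord_eq (by simp [length_sigWord])
  · rw [List.pairwise_iff_getElem]
    intro a b ha hb hab
    simp only [List.length_set, length_sigWord] at ha hb
    simp only [List.getElem_set, getElem_sigWord]
    split_ifs with h1 h2
    · omega
    · have := colEntry_lt_colEntry c (show r < b by omega) hb
      omega
    · exact habove a (by omega)
    · exact colEntry_lt_colEntry c hab hb
  · intro x hx
    rcases List.mem_or_eq_of_mem_set hx with hx | rfl
    · obtain ⟨s, hs, rfl⟩ := mem_sigWord_iff.mp hx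
      exact ⟨(succ_le_colEntry c hs).trans' (by omega), colEntry_le c s⟩
    · exact ⟨hi, by have := colEntry_le c r; omega⟩

lemma exists_flatMap_sigWord_eq_set {i : ℕ} (hi : 1 ≤ i) (p : List (RectTableau n k 1))
    (pos : ℕ) (hpos : (p.flatMap sigWord)[pos]? = some (i + 1))
    (hprev : pos ≠ 0 → (p.flatMap sigWord)[pos - 1]? ≠ some i) :
    ∃ q : List (RectTableau n k 1),
      q.length = p.length ∧ q.flatMap sigWord = (p.flatMap sigWord).set pos i := by
  induction p generalizing pos with
  | nil => simp at hpos
  | cons c p ih =>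
    simp only [List.flatMap_cons] at hpos hprev ⊢
    by_cases hk : pos < k
    · have hlen : pos < (sigWord c).length := by rw [length_sigWord]; exact hk
      rw [List.getElem?_append_left hlen] at hpos
      obtain ⟨c', hc'⟩ := exists_sigWord_eq_set hi c hpos fun h0 => by
        rw [← List.getElem?_append_left (by omega : pos - 1 < (sigWord c).length)]
        exact hprev h0
      exact ⟨c' :: p, rfl, by rw [List.flatMap_cons, hc', List.set_append_left _ _ hlen]⟩
    · have hlen : (sigWord c).length ≤ pos := by rw [length_sigWord]; omega
      rw [List.getElem?_append_right hlen, length_sigWord] at hpos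
      obtain ⟨q, hq, hq'⟩ := ih (pos - k) hpos fun h0 => by
        have := hprev (by omega)
        rwa [List.getElem?_append_right (by rw [length_sigWord]; omega), length_sigWord,
          show pos - 1 - k = pos - k - 1 by omega] at this
      refine ⟨c :: q, by simp [hq], ?_⟩
      rw [List.flatMap_cons, hq', List.set_append_right _ _ hlen, length_sigWord]

lemma exists_flatMap_sigWord_eq_of_eWord_eq_some {i : ℕ} (hi : 1 ≤ i)
    (p : List (RectTableau n k 1)) {w : List ℕ} (h : eWord i (p.flatMap sigWord) = some w) :
    ∃ q : List (RectTableau n k 1), q.length = p.length ∧ q.flatMap sigWord = w := by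
  unfold eWord at h
  split at h
  · exact absurd h (by simp)
  · rename_i pos hlast
    rw [← Option.some_inj.mp h]
    have hmem := List.mem_of_getLast? hlast
    refine exists_flatMap_sigWord_eq_set hi p pos (getElem?_of_mem_sigUnpaired_fst hmem) ?_
    intro h0 hprev
    exact succ_not_mem_sigUnpaired_fst hprev (by rwa [Nat.sub_add_cancel (by omega)])

/-- The net sign of a word in which each of `i`, `i+1` occurs at most once. -/
def wordSgn (i : ℕ) (w : List ℕ) : Option Bool :=
  if i + 1 ∈ w ∧ i ∉ w then some false
  else if i ∈ w ∧ i + 1 ∉ w then some true else none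

/-- In a strictly increasing word an `i` is immediately followed by the `i+1`, if any, so the two
cancel. -/
lemma foldl_sgnStep_of_pairwise {i : ℕ} {w : List ℕ} (hw : w.Pairwise (· < ·)) (st : ℕ × ℕ) :
    (w.map (letterSgn i)).foldl sgnStep st = sgnStep st (wordSgn i w) := by
  induction w generalizing st with
  | nil => simp [wordSgn, sgnStep]
  | cons a w ih =>
    obtain ⟨hlt, hw⟩ := List.pairwise_cons.mp hw
    rw [List.map_cons, List.foldl_cons, ih hw]
    rcases st with ⟨m, _ | q⟩ <;> unfold letterSgn wordSgn <;>
      by_cases h1 : a = i <;> by_cases h2 : a = i + 1 <;>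
      by_cases h3 : i ∈ w <;> by_cases h4 : i + 1 ∈ w <;>
      simp [h1, h2, h3, h4, sgnStep, eq_comm (a := i), eq_comm (a := i + 1)] <;>
      first | omega | (have := hlt _ h3; omega) | (have := hlt _ h4; omega)

def colSgn (i : ℕ) (c : RectTableau n k 1) : Option Bool := wordSgn i (sigWord c)

lemma foldl_sgnStep_flatMap_sigWord (i : ℕ) (p : List (RectTableau n k 1)) (st : ℕ × ℕ) :
    ((p.flatMap sigWord).map (letterSgn i)).foldl sgnStep st
      = (p.map (colSgn i)).foldl sgnStep st := by
  induction p generalizing st with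
  | nil => rfl
  | cons c p ih =>
    rw [List.flatMap_cons, List.map_append, List.foldl_append,
      foldl_sgnStep_of_pairwise (pairwise_sigWord c), ih]
    rfl

lemma eList_eq_none_iff {i : ℕ} (hi : 1 ≤ i) (p : List (RectTableau n k 1)) :
    eList i p = none ↔ ((p.map (colSgn i)).foldl sgnStep (0, 0)).1 = 0 := by
  rw [← foldl_sgnStep_flatMap_sigWord, ← eWord_eq_none_iff]
  unfold eList
  split
  · simp_all
  · rename_i w hw
    simp [hw, dif_pos (exists_flatMap_sigWord_eq_of_eWord_eq_some hi p hw)]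

lemma colSgn_ne_minus_of_eList_eq_none {i : ℕ} (hi : 1 ≤ i) {pre post : List (RectTableau n k 1)}
    {c : RectTableau n k 1} (hpre : ∀ b ∈ pre, colSgn i b = none)
    (h : eList i (pre ++ c :: post) = none) : colSgn i c ≠ some false := by
  intro hc
  rw [eList_eq_none_iff hi, List.map_append, List.map_cons, hc] at h
  exact foldl_sgnStep_append_cons_fst_ne_zero (by simpa using hpre) _ h

lemma colSgn_head_ne_minus {i : ℕ} (hi : 1 ≤ i) {pre post : List (RectTableau n k 1)}
    {S : Fin d → RectTableau n k 1} (hd : 0 < d) (hpre : ∀ b ∈ pre, colSgn i b = none)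
    (h : eList i (pre ++ List.ofFn S ++ post) = none) : colSgn i (S ⟨0, hd⟩) ≠ some false := by
  obtain ⟨d, rfl⟩ : ∃ d', d = d' + 1 := ⟨d - 1, by omega⟩
  rw [List.ofFn_succ, List.append_assoc, List.cons_append] at h
  exact colSgn_ne_minus_of_eList_eq_none hi hpre h

/-- The letter `colEntry c r - 1` is missing from `c`. -/
lemma colSgn_eq_minus_of_gap {c : RectTableau n k 1} {r : ℕ} (hr : r < k)
    (hgap : ∀ s < r, colEntry c s + 1 < colEntry c r) :
    colSgn (colEntry c r - 1) c = some false := by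
  have hpos : 1 ≤ colEntry c r := (succ_le_colEntry c hr).trans' (Nat.le_add_left 1 r)
  have hmem : colEntry c r - 1 + 1 ∈ sigWord c := mem_sigWord_iff.mpr ⟨r, hr, by omega⟩
  have hnot : colEntry c r - 1 ∉ sigWord c := by
    intro hmem'
    obtain ⟨s, hs, hsr⟩ := mem_sigWord_iff.mp hmem'
    rcases Nat.lt_or_ge s r with hsr' | hsr'
    · have := hgap s hsr'
      omega
    · have := colEntry_le_colEntry c hsr' hs
      omega
  simp [colSgn, wordSgn, hmem, hnot]

lemma colEntry_eq_succ_of_colSgn_ne_minus {c : RectTableau n k 1} {m : ℕ} (hm : m ≤ k)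
    (hbound : ∀ r < m, colEntry c r ≤ m + 1)
    (h : ∀ i, 1 ≤ i → i ≤ m → colSgn i c ≠ some false) : ∀ r < m, colEntry c r = r + 1 := by
  intro r
  induction r using Nat.strong_induction_on with
  | _ r ih =>
    intro hr
    by_contra hne
    have hge := succ_le_colEntry c (show r < k by omega)
    refine h (colEntry c r - 1) (by omega) (by have := hbound r hr; omega)
      (colSgn_eq_minus_of_gap (by omega) fun s hs => ?_)
    rw [ih s hs (by omega)]
    omega

lemma colEntry_mkCol {m b : ℕ} (hm : k ≤ m + 1) (hb : m < b) (hn : b ≤ n) {r : ℕ} (hr : r < k) :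
    colEntry (mkCol n k m b hm hb hn) r
      = if r + 1 = k then b else if r + 2 = k then m else r + 1 :=
  colEntry_of_lt _ hr

lemma eq_mkCol_of_colEntry {c : RectTableau n k 1} {m b : ℕ} (hk : 2 ≤ k) (hm : k ≤ m + 1)
    (hb : m < b) (hn : b ≤ n) (hlow : ∀ r, r + 2 < k → colEntry c r = r + 1)
    (hmid : colEntry c (k - 2) = m) (hbot : colEntry c (k - 1) = b) :
    c = mkCol n k m b hm hb hn := by
  refine ext_colEntry fun r hr => ?_
  rw [colEntry_mkCol _ _ _ hr]
  split_ifs with h1 h2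
  · rw [← hbot, show r = k - 1 by omega]
  · rw [← hmid, show r = k - 2 by omega]
  · exact hlow r (by omega)

lemma mem_sigWord_mkCol {m b : ℕ} (hk : 2 ≤ k) (hm : k ≤ m + 1) (hb : m < b) (hn : b ≤ n)
    {x : ℕ} : x ∈ sigWord (mkCol n k m b hm hb hn) ↔ (1 ≤ x ∧ x + 2 ≤ k) ∨ x = m ∨ x = b := by
  rw [mem_sigWord_iff]
  constructor
  · rintro ⟨r, hr, rfl⟩
    rw [colEntry_mkCol _ _ _ hr]
    split_ifs <;> omega
  · rintro (⟨h1, h2⟩ | rfl | rfl)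
    · exact ⟨x - 1, by omega, by rw [colEntry_mkCol _ _ _ (by omega)]; split_ifs <;> omega⟩
    · exact ⟨k - 2, by omega, by rw [colEntry_mkCol _ _ _ (by omega)]; split_ifs <;> omega⟩
    · exact ⟨k - 1, by omega, by rw [colEntry_mkCol _ _ _ (by omega)]; split_ifs <;> omega⟩

lemma colSgn_col0 (hk : 2 ≤ k) (hkn : k ≤ n) {i : ℕ} (hi : 1 ≤ i) (hik : i ≠ k) :
    colSgn i (col0 n k (by omega) hkn) = none := by
  unfold colSgn wordSgn col0
  simp only [mem_sigWord_mkCol hk]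
  split_ifs <;> first | rfl | omega

lemma colSgn_col1 (hk : 2 ≤ k) (hkn : k + 1 ≤ n) {i : ℕ} (hi : 1 ≤ i) (hik : i ≠ k) :
    colSgn i (col1 n k (by omega) hkn) = if i = k - 1 ∨ i = k + 1 then some true else none := by
  unfold colSgn wordSgn col1
  simp only [mem_sigWord_mkCol hk]
  split_ifs <;> first | rfl | omega

lemma eq_of_colSgn_mkCol_eq_minus {m b : ℕ} (hk : 2 ≤ k) (hm : k ≤ m + 1) (hb : m < b)
    (hn : b ≤ n) (hmk : m ≤ k) (hbk : b ≤ k + 2) {i : ℕ} (hi : 1 ≤ i) (hik : i ≠ k)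
    (h : colSgn i (mkCol n k m b hm hb hn) = some false) : i = k - 1 ∨ i = k + 1 := by
  unfold colSgn wordSgn at h
  simp only [mem_sigWord_mkCol hk] at h
  split_ifs at h <;> first | omega | simp at h

/-- The `j`-th column (from `0`) of `[𝟑]^{⊗α} ⊗ [𝟐_s]^{⊗(d-α-β)} ⊗ [𝟏]^{⊗β}`, where `[𝟐_true]` is
`[𝟐₊]` and `[𝟐_false]` is `[𝟐₋]`. -/
def patternCol (hk : 2 ≤ k) (hkn : k + 2 ≤ n) (d α β : ℕ) (s : Bool) (j : ℕ) :
    RectTableau n k 1 :=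
  if j < α then col3 n k (by omega) hkn
  else if j < d - β then
    (if s then col2p n k (by omega) (by omega) else col2m n k (by omega) hkn)
  else col1 n k (by omega) (by omega)

lemma eq_of_colSgn_patternCol_eq_minus (hk : 2 ≤ k) (hkn : k + 2 ≤ n) {d α β : ℕ} {s : Bool}
    {i j : ℕ} (hi : 1 ≤ i) (hik : i ≠ k) (h : colSgn i (patternCol hk hkn d α β s j) = some false) :
    i = k - 1 ∨ i = k + 1 := by
  unfold patternCol at h
  split_ifs at h <;> exact eq_of_colSgn_mkCol_eq_minus hk _ _ _ (by omega) (by omega) hi hik h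

lemma exists_forall_iff_lt_of_antitone {d : ℕ} {P : Fin d → Prop} (hP : Antitone P) :
    ∃ x ≤ d, ∀ j : Fin d, P j ↔ j.1 < x := by
  by_cases h : ∃ m, ∃ hm : m < d, ¬ P ⟨m, hm⟩
  · obtain ⟨hm, hnot⟩ := Nat.find_spec h
    refine ⟨Nat.find h, hm.le, fun j => ⟨fun hj => ?_, fun hj => ?_⟩⟩
    · by_contra hge
      exact hnot (hP (show (⟨Nat.find h, hm⟩ : Fin d) ≤ j from not_lt.mp hge) hj)
    · have := Nat.find_min h hj
      push Not at this
      exact this j.2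
  · push Not at h
    exact ⟨d, le_rfl, fun j => ⟨fun _ => j.2, fun _ => h j j.2⟩⟩

lemma exists_decomp_of_thresholds {x y d : ℕ} (hx : x ≤ d) (hy : y ≤ d) :
    ∃ (α β : ℕ) (s : Bool), α + β ≤ d ∧ ∀ j < d,
      (j < y ↔ j < α ∨ j < d - β ∧ s) ∧ (j < x ↔ j < α ∨ j < d - β ∧ ¬s) := by
  rcases le_total x y with h | h
  · refine ⟨x, d - y, true, by omega, fun j hj => ?_⟩
    simp only [and_true, not_true_eq_false, and_false, or_false]
    omega
  · refine ⟨y, d - x, false, by omega, fun j hj => ?_⟩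
    simp only [Bool.false_eq_true, and_false, or_false, not_false_eq_true, and_true, iff_self,
      true_and]
    omega

section Soliton

variable {S : Fin d → RectTableau n k 1} {pre post : List (RectTableau n k 1)}

lemma IsSolitonFn.antitone_colEntry (hS : IsSolitonFn S) (r : ℕ) :
    Antitone fun j => colEntry (S j) r := by
  intro a b hab
  dsimp only
  obtain ⟨a, ha⟩ := a
  obtain ⟨b, hb⟩ := b
  change a ≤ b at hab
  induction b, hab using Nat.le_induction with
  | base => exact le_rfl
  | succ b hab ih =>
    refine le_trans ?_ (ih (by omega))
    by_cases hr : r < k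
    · rw [colEntry_of_lt _ hr, colEntry_of_lt _ hr]
      exact hS.1 ⟨b, by omega⟩ ⟨b + 1, hb⟩ rfl _ _
    · simp [colEntry, hr]

lemma IsSolitonFn.lt_colEntry_sub_one (hS : IsSolitonFn S) (hk : 1 ≤ k) (j : Fin d) :
    k < colEntry (S j) (k - 1) := by
  rw [colEntry_of_lt _ (by omega)]
  exact hS.2.1 j _ 0 (by simp only; omega)

lemma IsSolitonFn.colEntry_sub_two_le (hS : IsSolitonFn S) (hk : 2 ≤ k) (j : Fin d) :
    colEntry (S j) (k - 2) ≤ k := by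
  rw [colEntry_of_lt _ (by omega)]
  exact hS.2.2 j _ 0 (by simp only; omega)

lemma IsSolitonFn.eq_col1_of_eList_eq_none (hS : IsSolitonFn S) (hk : 2 ≤ k) (hkn : k + 1 ≤ n)
    (hpre : ∀ i, 1 ≤ i → i ≠ k → ∀ b ∈ pre, colSgn i b = none)
    (h : ∀ i, 1 ≤ i → i < n → i ≠ k → eList i (pre ++ List.ofFn S ++ post) = none)
    (j : Fin d) : S j = col1 n k (by omega) hkn := by
  set c := S ⟨0, j.pos⟩
  have hc : ∀ i, 1 ≤ i → i < n → i ≠ k → colSgn i c ≠ some false := fun i h1 h2 h3 =>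
    colSgn_head_ne_minus h1 j.pos (hpre i h1 h3) (h i h1 h2 h3)
  have hmid : colEntry c (k - 2) ≤ k := hS.colEntry_sub_two_le hk _
  have htop : ∀ r < k - 1, colEntry c r = r + 1 :=
    colEntry_eq_succ_of_colSgn_ne_minus (by omega)
      (fun r hr => by have := colEntry_le_colEntry c (show r ≤ k - 2 by omega) (by omega); omega)
      (fun i h1 h2 => hc i h1 (by omega) (by omega))
  have hbot : colEntry c (k - 1) = k + 1 := by
    have : k < colEntry c (k - 1) := hS.lt_colEntry_sub_one (by omega) _
    by_contra hne
    refine hc (colEntry c (k - 1) - 1) (by omega) (by have := colEntry_le c (k - 1); omega)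
      (by omega) (colSgn_eq_minus_of_gap (by omega) fun s hs => ?_)
    have := colEntry_le_colEntry c (show s ≤ k - 2 by omega) (by omega)
    omega
  have hle : ∀ r, colEntry (S j) r ≤ colEntry c r := fun r =>
    hS.antitone_colEntry r (show (⟨0, j.pos⟩ : Fin d) ≤ j from Nat.zero_le _)
  have hge : ∀ r < k, r + 1 ≤ colEntry (S j) r := fun r hr => succ_le_colEntry _ hr
  refine eq_mkCol_of_colEntry hk _ _ _ (fun r hr => ?_) ?_ ?_
  · have := hle r; have := htop r (by omega); have := hge r (by omega); omega
  · have := hle (k - 2); have := htop (k - 2) (by omega); have := hge (k - 2) (by omega); omega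
  · have := hle (k - 1); have := hS.lt_colEntry_sub_one (by omega) j; omega

lemma IsSolitonFn.colEntry_of_eList_eq_none (hS : IsSolitonFn S) (hk : 2 ≤ k)
    (hpre : ∀ i, 1 ≤ i → i ≠ k → i ≠ k - 1 → i ≠ k + 1 → ∀ b ∈ pre, colSgn i b = none)
    (h : ∀ i, 1 ≤ i → i < n → i ≠ k → eList i (pre ++ List.ofFn S ++ post) = none)
    (j : Fin d) : (∀ r, r + 2 < k → colEntry (S j) r = r + 1) ∧ colEntry (S j) (k - 1) ≤ k + 2 := by
  set c := S ⟨0, j.pos⟩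
  have hkn : k < n := (hS.lt_colEntry_sub_one (by omega) j).trans_le (colEntry_le _ _)
  have hc : ∀ i, 1 ≤ i → i < n → i ≠ k → i ≠ k - 1 → i ≠ k + 1 → colSgn i c ≠ some false :=
    fun i h1 h2 h3 h4 h5 => colSgn_head_ne_minus h1 j.pos (hpre i h1 h3 h4 h5) (h i h1 h2 h3)
  have hmid : colEntry c (k - 2) ≤ k := hS.colEntry_sub_two_le hk _
  have htop : ∀ r < k - 2, colEntry c r = r + 1 :=
    colEntry_eq_succ_of_colSgn_ne_minus (by omega)
      (fun r hr => by have := colEntry_lt_colEntry c (show r < k - 2 by omega) (by omega); omega)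
      (fun i h1 h2 => hc i h1 (by omega) (by omega) (by omega) (by omega))
  have hbot : colEntry c (k - 1) ≤ k + 2 := by
    by_contra hgt
    refine hc (colEntry c (k - 1) - 1) (by omega) (by have := colEntry_le c (k - 1); omega)
      (by omega) (by omega) (by omega) (colSgn_eq_minus_of_gap (by omega) fun s hs => ?_)
    have := colEntry_le_colEntry c (show s ≤ k - 2 by omega) (by omega)
    omega
  have hle : ∀ r, colEntry (S j) r ≤ colEntry c r := fun r =>
    hS.antitone_colEntry r (show (⟨0, j.pos⟩ : Fin d) ≤ j from Nat.zero_le _)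
  refine ⟨fun r hr => ?_, (hle _).trans hbot⟩
  have := hle r; have := htop r (by omega); have := succ_le_colEntry (S j) (show r < k by omega)
  omega

lemma IsSolitonFn.exists_eq_patternCol (hS : IsSolitonFn S) (hk : 2 ≤ k) (hkn : k + 2 ≤ n)
    (hlow : ∀ j r, r + 2 < k → colEntry (S j) r = r + 1)
    (hbot : ∀ j, colEntry (S j) (k - 1) ≤ k + 2) :
    ∃ (α β : ℕ) (s : Bool), α + β ≤ d ∧ ∀ j : Fin d, S j = patternCol hk hkn d α β s j := by
  obtain ⟨x, hx, hxj⟩ := exists_forall_iff_lt_of_antitone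
    (P := fun j => colEntry (S j) (k - 1) = k + 2) fun a b hab (hb : _ = _) =>
      le_antisymm (hbot a) (hb.symm.trans_le (hS.antitone_colEntry _ hab))
  obtain ⟨y, hy, hyj⟩ := exists_forall_iff_lt_of_antitone
    (P := fun j => colEntry (S j) (k - 2) = k) fun a b hab (hb : _ = _) =>
      le_antisymm (hS.colEntry_sub_two_le hk a) (hb.symm.trans_le (hS.antitone_colEntry _ hab))
  obtain ⟨α, β, s, hαβ, hdec⟩ := exists_decomp_of_thresholds hx hy
  refine ⟨α, β, s, hαβ, fun j => ?_⟩
  have hmid : colEntry (S j) (k - 2) = if j.1 < y then k else k - 1 := by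
    split_ifs with hjy
    · exact (hyj j).mpr hjy
    · have h1 := hS.colEntry_sub_two_le hk j
      have h2 := succ_le_colEntry (S j) (show k - 2 < k by omega)
      have h3 : colEntry (S j) (k - 2) ≠ k := fun h => hjy ((hyj j).mp h)
      omega
  have hbot' : colEntry (S j) (k - 1) = if j.1 < x then k + 2 else k + 1 := by
    split_ifs with hjx
    · exact (hxj j).mpr hjx
    · have h1 := hbot j
      have h2 := hS.lt_colEntry_sub_one (by omega) j
      have h3 : colEntry (S j) (k - 1) ≠ k + 2 := fun h => hjx ((hxj j).mp h)
      omega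
  obtain ⟨hyd, hxd⟩ := hdec j j.2
  unfold patternCol
  split_ifs with h1 h2 hs <;>
    refine eq_mkCol_of_colEntry hk _ _ _ (hlow j) ?_ ?_ <;> simp_all

end Soliton

lemma eList_eq_none_of_patternCol (hk : 2 ≤ k) (hkn : k + 2 ≤ n) (c1 gap h2 : ℕ)
    {S1 : Fin d1 → RectTableau n k 1} {S2 : Fin d2 → RectTableau n k 1} (hd : d2 ≤ d1)
    (hS1 : ∀ j, S1 j = col1 n k (by omega) (by omega)) {α β : ℕ} {s : Bool}
    (hS2 : ∀ j : Fin d2, S2 j = patternCol hk hkn d2 α β s j) {i : ℕ} (hi : 1 ≤ i) (hik : i ≠ k) :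
    eList i (List.replicate c1 (col0 n k (by omega) (by omega)) ++ List.ofFn S1 ++
      List.replicate gap (col0 n k (by omega) (by omega)) ++ List.ofFn S2 ++
      List.replicate h2 (col0 n k (by omega) (by omega))) = none := by
  have hcount : ((List.ofFn S2).map (colSgn i)).count (some false)
      ≤ if i = k - 1 ∨ i = k + 1 then d2 else 0 := by
    split_ifs with hi'
    · exact List.count_le_length.trans (by simp)
    · refine (List.count_eq_zero.mpr fun hmem => hi' ?_).le
      obtain ⟨j, hj⟩ := List.mem_ofFn.mp (by simpa using hmem)
      rw [hS2 j] at hj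
      exact eq_of_colSgn_patternCol_eq_minus hk hkn hi hik hj
  rw [eList_eq_none_iff hi, show List.ofFn S1 = List.replicate d1 (col1 n k (by omega) (by omega))
    by simp [funext hS1]]
  simp only [List.map_append, List.map_replicate, colSgn_col0 hk _ hi hik,
    colSgn_col1 hk _ hi hik, List.append_assoc]
  rw [← List.append_assoc]
  apply foldl_sgnStep_append_fst_eq_zero
  · split_ifs <;> simp
  · calc _ = ((List.ofFn S2).map (colSgn i)).count (some false) := by simp [List.count_replicate]
      _ ≤ _ := hcount
      _ ≤ _ := by split_ifs <;> simp [List.count_replicate, hd]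

end BBS
open BBS in
/-- the highest weight elements among two soliton states (i.e. those killed by
`e_i` for all `i ∈ I \ {0,k}`) are exactly the states
`[𝟎]^{⊗c₁} ⊗ [𝟏]^{⊗d₁} ⊗ [𝟎]^{⊗(c₂-c₁-d₁)} ⊗ [𝟑]^{⊗α} ⊗ [𝟐_±]^{⊗(d₂-α-β)} ⊗ [𝟏]^{⊗β} ⊗ [𝟎]^{⊗(L-c₂-d₂)}`
with `0 ≤ α + β ≤ d₂`. -/
theorem highest_weight_two_solitons {n k : ℕ} (hk : 2 ≤ k) (hkn : k + 2 ≤ n)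
    (c1 d1 c2 d2 h2 : ℕ) (hd21 : d2 < d1)
    (S1 : Fin d1 → RectTableau n k 1) (S2 : Fin d2 → RectTableau n k 1)
    (hS1 : IsSolitonFn S1) (hS2 : IsSolitonFn S2) :
    (∀ i : ℕ, 1 ≤ i → i < n → i ≠ k →
        eList i (List.replicate c1 (col0 n k (by omega) (by omega)) ++ List.ofFn S1 ++
          List.replicate (c2 - c1 - d1) (col0 n k (by omega) (by omega)) ++ List.ofFn S2 ++
          List.replicate h2 (col0 n k (by omega) (by omega))) = none)
    ↔ ∃ (α β : ℕ) (s : Bool), α + β ≤ d2 ∧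
        (∀ j : Fin d1, S1 j = col1 n k (by omega) (by omega)) ∧
        (∀ j : Fin d2, S2 j =
          if j.1 < α then col3 n k (by omega) (by omega)
          else if j.1 < d2 - β then
            (if s then col2p n k (by omega) (by omega) else col2m n k (by omega) (by omega))
          else col1 n k (by omega) (by omega)) := by
  have hcol0 {i m : ℕ} (hi : 1 ≤ i) (hik : i ≠ k) :
      ∀ b ∈ List.replicate m (col0 n k (by omega) (by omega)), colSgn i b = none :=
    fun b hb => (List.eq_of_mem_replicate hb) ▸ colSgn_col0 hk _ hi hik
  constructor
  · intro H
    have hS1col1 := hS1.eq_col1_of_eList_eq_none hk (by omega) (fun i hi hik => hcol0 hi hik)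
      (fun i hi hin hik => by simpa only [List.append_assoc] using H i hi hin hik)
    have hpre {i : ℕ} (hi : 1 ≤ i) (hik : i ≠ k) (hik' : i ≠ k - 1) (hik'' : i ≠ k + 1) :
        ∀ b ∈ List.replicate c1 (col0 n k (by omega) (by omega)) ++ List.ofFn S1 ++
          List.replicate (c2 - c1 - d1) (col0 n k (by omega) (by omega)), colSgn i b = none := by
      simp only [List.mem_append, List.mem_ofFn]
      rintro b ((hb | ⟨j, rfl⟩) | hb)
      · exact hcol0 hi hik b hb
      · rw [hS1col1 j, colSgn_col1 hk _ hi hik, if_neg (by omega)]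
      · exact hcol0 hi hik b hb
    have hS2form := hS2.colEntry_of_eList_eq_none hk
      (fun _ hi hik hik' hik'' => hpre hi hik hik' hik'') H
    obtain ⟨α, β, s, hαβ, hS2pat⟩ :=
      hS2.exists_eq_patternCol hk hkn (fun j => (hS2form j).1) (fun j => (hS2form j).2)
    exact ⟨α, β, s, hαβ, hS1col1, hS2pat⟩
  · rintro ⟨α, β, s, -, hS1col1, hS2pat⟩ i hi - hik
    exact eList_eq_none_of_patternCol hk hkn _ _ _ hd21.le hS1col1 hS2pat hi hik
end

section
/- With u = [𝟏^{d_1}] ∈ B^{k,d_1} and v = [𝟏^β 𝟐_±^{d_2−α−β} 𝟑^α] ∈ B^{k,d_2} (d_1 > d_2 ≥ α+β), the total phase shift equals 2d_2 + H(u_k ⊗ v_k) + H(u_{<k} ⊗ v_{<k}) = d_2 − α + β. -/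
/-! Both energies are instances of one insertion. Let `x` have rows `a, a+1, …, a+m`, each
of length `e`, and let `y` have rows `a^d, …, (a+m-1)^d` followed by `(a+m)^p (a+m+1)^(d-p)`,
where `p ≤ d ≤ e`. In `y ← row(x) = y ← (a+m)^e ⋯ a^e`, the copies of each letter push a
staircase of larger letters down by one row, and only the copies of `a+m` reach the last row of
`y`, whose `d-p` letters `a+m+1` they bump into a new row. So exactly `m d + p` boxes lie east
of column `e`, and `H(x ⊗ y) = p - d`. For `u_k ⊗ v_k` (`m = 0`) and `u_{<k} ⊗ v_{<k}`
(`m = k-2`) the two values of `p` are `d₂ - α` and `β`, in an order depending on `±`. -/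

open List

namespace BBS

theorem rowInsertOne_cons_of_forall_le {r : List ℕ} {a : ℕ} (rest : List (List ℕ))
    (h : ∀ x ∈ r, x ≤ a) : rowInsertOne (r :: rest) a = (r ++ [a]) :: rest := by
  have hnone : r.findIdx? (fun x => decide (a < x)) = none := by
    simpa [findIdx?_eq_none_iff] using h
  simp only [rowInsertOne, hnone]

theorem rowInsertOne_bump {p : List ℕ} {a b : ℕ} (hp : ∀ x ∈ p, x ≤ a) (hab : a < b)
    (q : List ℕ) (rest : List (List ℕ)) :
    rowInsertOne ((p ++ b :: q) :: rest) a = (p ++ a :: q) :: rowInsertOne rest b := by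
  have hidx : (p ++ b :: q).findIdx? (fun x => decide (a < x)) = some p.length := by
    have hnone : p.findIdx? (fun x => decide (a < x)) = none := by
      simpa [findIdx?_eq_none_iff] using hp
    simp [findIdx?_append, hnone, findIdx?_cons, hab]
  simp [rowInsertOne, hidx, getD]

theorem rowInsertWord_append (T : List (List ℕ)) (w w' : List ℕ) :
    rowInsertWord T (w ++ w') = rowInsertWord (rowInsertWord T w) w' :=
  foldl_append

theorem rowInsertWord_nil_right (T : List (List ℕ)) : rowInsertWord T [] = T := rfl

theorem rowInsertWord_replicate_succ (T : List (List ℕ)) (a u : ℕ) :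
    rowInsertWord T (replicate (u + 1) a) = rowInsertOne (rowInsertWord T (replicate u a)) a := by
  rw [replicate_succ', rowInsertWord_append]
  rfl

theorem rowInsertWord_replicate_of_step (B : ℕ → List (List ℕ)) (a : ℕ) {u : ℕ}
    (h : ∀ t < u, rowInsertOne (B t) a = B (t + 1)) :
    rowInsertWord (B 0) (replicate u a) = B u := by
  induction u with
  | zero => rfl
  | succ u ih => rw [rowInsertWord_replicate_succ, ih fun t ht => h t (by omega), h u (by omega)]

theorem rowInsertWord_cons_replicate {r : List ℕ} {a : ℕ} (rest : List (List ℕ))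
    (h : ∀ x ∈ r, x ≤ a) (u : ℕ) :
    rowInsertWord (r :: rest) (replicate u a) = (r ++ replicate u a) :: rest := by
  simpa using rowInsertWord_replicate_of_step (fun t => (r ++ replicate t a) :: rest) a (u := u)
    fun t _ => by
      rw [rowInsertOne_cons_of_forall_le rest fun x hx => by
        rcases mem_append.1 hx with hx | hx
        exacts [h x hx, (eq_of_mem_replicate hx).le]]
      simp [replicate_succ']

theorem eastCount_append (T T' : List (List ℕ)) (c : ℕ) :
    eastCount (T ++ T') c = eastCount T c + eastCount T' c := by
  simp [eastCount]

theorem eastCount_rowInsertWord_nil_replicate (u x c : ℕ) :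
    eastCount (rowInsertWord [] (replicate u x)) c = u - c := by
  cases u with
  | zero => simp [rowInsertWord, eastCount]
  | succ u =>
    have h := rowInsertWord_cons_replicate [] (r := [x]) (a := x) (by simp) u
    simp only [rowInsertWord, replicate_succ, foldl_cons] at h ⊢
    simp [rowInsertOne, h, eastCount]

section Stair

/-- Rows `(a+j)^d (c+j)^t (c+j+1)^u` for `j < r`. -/
def stair (d a c t u : ℕ) : ℕ → List (List ℕ)
  | 0 => []
  | r + 1 =>
    (replicate d a ++ replicate t c ++ replicate u (c + 1)) :: stair d (a + 1) (c + 1) t u r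

variable {d a c t u : ℕ}

theorem stair_succ' (r : ℕ) : stair d a c t u (r + 1) = stair d a c t u r ++
      [replicate d (a + r) ++ replicate t (c + r) ++ replicate u (c + r + 1)] := by
  induction r generalizing a c with
  | zero => simp [stair]
  | succ r ih =>
    rw [stair, ih, stair, cons_append, Nat.add_right_comm a 1 r, Nat.add_right_comm c 1 r]
    rfl

theorem stair_shift (r : ℕ) : stair d a (c + 1) u 0 r = stair d a c 0 u r := by
  induction r generalizing a c with
  | zero => rfl
  | succ r ih => simp [stair, ih]

theorem rowInsertOne_stair (hac : a ≤ c) (r : ℕ) (R : List (List ℕ)) :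
    rowInsertOne (stair d a c t (u + 1) r ++ R) c
      = stair d a c (t + 1) u r ++ rowInsertOne R (c + r) := by
  induction r generalizing a c with
  | zero => simp [stair]
  | succ r ih =>
    have hrow : replicate d a ++ replicate t c ++ replicate (u + 1) (c + 1)
        = (replicate d a ++ replicate t c) ++ (c + 1) :: replicate u (c + 1) := by
      simp [replicate_succ]
    rw [stair, cons_append, hrow, rowInsertOne_bump (by simp; omega) (Nat.lt_succ_self c),
      ih (by omega), stair, show c + 1 + r = c + (r + 1) by omega]
    simp [replicate_succ']

theorem rowInsertWord_stair (hac : a ≤ c) (r : ℕ) (R : List (List ℕ)) :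
    rowInsertWord (stair d a c 0 u r ++ R) (replicate u c)
      = stair d a c u 0 r ++ rowInsertWord R (replicate u (c + r)) := by
  simpa [rowInsertWord_nil_right] using rowInsertWord_replicate_of_step (u := u)
    (fun s => stair d a c s (u - s) r ++ rowInsertWord R (replicate s (c + r))) c fun s hs => by
      obtain ⟨v, hv⟩ : ∃ v, u - s = v + 1 := ⟨u - s - 1, by omega⟩
      rw [hv, rowInsertOne_stair hac, rowInsertWord_replicate_succ,
        show u - (s + 1) = v by omega]

theorem eastCount_stair (r : ℕ) : eastCount (stair d a c t 0 r) t = r * d := by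
  induction r generalizing a c with
  | zero => simp [stair, eastCount]
  | succ r ih =>
    rw [stair, ← singleton_append, eastCount_append, ih]
    simp [eastCount, Nat.succ_mul, Nat.add_comm]

def constRows (d b c : ℕ) : List (List ℕ) := (range c).map fun i => replicate d (b + i)

def descWord (e a m : ℕ) : List ℕ := (range m).reverse.flatMap fun i => replicate e (a + i)

theorem constRows_succ (d b c : ℕ) :
    constRows d b (c + 1) = replicate d b :: constRows d (b + 1) c := by
  simp [constRows, range_succ_eq_map, Nat.add_assoc, Nat.add_comm 1]

theorem descWord_succ (e a m : ℕ) :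
    descWord e a (m + 1) = replicate e (a + m) ++ descWord e a m := by
  simp [descWord, range_succ]

theorem rowInsertWord_stair_constRows_descWord (e : ℕ) (R : List (List ℕ)) (c : ℕ) :
    ∀ r, rowInsertWord (stair d a (a + c) 0 e r ++ (constRows d (a + r) c ++ R))
        (descWord e a (c + 1))
      = stair d a a e 0 (c + r) ++ rowInsertWord R (replicate e (a + c + r)) := by
  induction c with
  | zero =>
    intro r
    simpa [constRows, descWord] using rowInsertWord_stair (le_refl a) r R (d := d) (u := e)
  | succ c ih =>
    intro r
    calc rowInsertWord (stair d a (a + (c + 1)) 0 e r ++ (constRows d (a + r) (c + 1) ++ R))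
          (descWord e a (c + 1 + 1))
        = rowInsertWord (rowInsertWord
            (stair d a (a + c + 1) 0 e r ++ replicate d (a + r) :: (constRows d (a + r + 1) c ++ R))
            (replicate e (a + c + 1))) (descWord e a (c + 1)) := by
          rw [descWord_succ, rowInsertWord_append, constRows_succ, cons_append]; rfl
      _ = rowInsertWord (stair d a (a + c + 1) e 0 r ++
            (replicate d (a + r) ++ replicate e (a + c + 1 + r)) ::
              (constRows d (a + r + 1) c ++ R))
            (descWord e a (c + 1)) := by
          rw [rowInsertWord_stair (by omega), rowInsertWord_cons_replicate _ (by simp; omega)]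
      _ = rowInsertWord (stair d a (a + c) 0 e (r + 1) ++ (constRows d (a + (r + 1)) c ++ R))
            (descWord e a (c + 1)) := by
          rw [← stair_shift, stair_succ']
          simp only [replicate_zero, append_nil, append_assoc, singleton_append]
          rfl
      _ = stair d a a e 0 (c + 1 + r) ++ rowInsertWord R (replicate e (a + (c + 1) + r)) := by
          rw [ih (r + 1), show c + (r + 1) = c + 1 + r by omega,
            show a + c + (r + 1) = a + (c + 1) + r by omega]

end Stair

theorem rowInsertWord_constRows_descWord (d e a m : ℕ) (R : List (List ℕ)) :
    rowInsertWord (constRows d a m ++ R) (descWord e a (m + 1))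
      = stair d a a e 0 m ++ rowInsertWord R (replicate e (a + m)) := by
  simpa [stair] using rowInsertWord_stair_constRows_descWord (d := d) (a := a) e R m 0

theorem eastCount_rowInsertWord_twoLetterRow {p q e L : ℕ} (hq : q ≤ e) :
    eastCount (rowInsertWord [replicate p L ++ replicate q (L + 1)] (replicate e L)) e = p := by
  have hbump := rowInsertWord_stair (d := p) (u := q) (le_refl L) 1 []
  simp only [stair, replicate_zero, append_nil, singleton_append] at hbump
  rw [← Nat.add_sub_cancel' hq, replicate_add, rowInsertWord_append, hbump,
    rowInsertWord_cons_replicate _ (by simp), ← singleton_append, eastCount_append,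
    eastCount_rowInsertWord_nil_replicate]
  simp [eastCount]
  omega

section Entries

variable {n k l : ℕ} (x : RectTableau n k l)

theorem toRows_eq_of_entry (f : ℕ → ℕ → ℕ) (h : ∀ i j, x.entry i j = f i j) :
    toRows x = (range k).map fun i => (range l).map (f i) := by
  simp only [toRows, h, ← map_coe_finRange_eq_range, map_map]
  rfl

theorem rowWord_eq_descWord {a : ℕ} (h : ∀ i j, x.entry i j = a + i) :
    rowWord x = descWord l a k := by
  simp only [rowWord, descWord, h, ← map_coe_finRange_eq_range, ← map_reverse, flatMap_map,
    map_const', length_finRange]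

theorem toRows_eq_constRows_append {m d p a : ℕ} (y : RectTableau n (m + 1) d)
    (h : ∀ i j, y.entry i j = if i.1 = m ∧ p ≤ j.1 then a + i + 1 else a + i) (hp : p ≤ d) :
    toRows y = constRows d a m ++ [replicate p (a + m) ++ replicate (d - p) (a + m + 1)] := by
  rw [toRows_eq_of_entry y (fun i j => if i = m ∧ p ≤ j then a + i + 1 else a + i) h,
    range_succ, map_append, constRows, map_singleton]
  congr 1
  · refine map_congr_left fun i hi => ?_
    simp [(mem_range.1 hi).ne, map_const']
  · rw [← Nat.add_sub_cancel' hp, range_add, map_append, map_map, Nat.add_sub_cancel_left]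
    congr 2
    · rw [map_congr_left (g := fun _ => a + m) fun j hj => if_neg (by simpa using hj)]
      simp [map_const']
    · rw [map_congr_left (g := fun _ => a + m + 1) fun j _ => by simp]
      simp [map_const']

end Entries

theorem energyH_staircase {n m e d p a : ℕ} (x : RectTableau n (m + 1) e)
    (y : RectTableau n (m + 1) d) (hx : ∀ i j, x.entry i j = a + i)
    (hy : ∀ i j, y.entry i j = if i.1 = m ∧ p ≤ j.1 then a + i + 1 else a + i)
    (hp : p ≤ d) (hde : d ≤ e) : energyH x y = p - d := by
  rw [energyH, rowWord_eq_descWord x hx, toRows_eq_constRows_append y hy hp,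
    rowInsertWord_constRows_descWord, max_eq_left hde, eastCount_append, eastCount_stair,
    eastCount_rowInsertWord_twoLetterRow (by omega), min_self, min_eq_right (Int.ofNat_le.2 hde)]
  push_cast
  ring

theorem energyH_rowK_pat3 {n k d1 d2 a ab : ℕ} {s : Bool} (hk : 2 ≤ k) (hkn : k + 2 ≤ n)
    (h1 : 1 ≤ k) (hab : a ≤ ab) (hab2 : ab ≤ d2) (hd : d2 ≤ d1) :
    energyH (rowK h1 (pat3 n k d1 d1 d1 s hk hkn)) (rowK h1 (pat3 n k d2 a ab s hk hkn))
      = ((if s then ab else a : ℕ) : ℤ) - d2 := by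
  refine energyH_staircase (m := 0) (a := k + 1) _ _ (fun i j => ?_) (fun i j => ?_)
    (by split <;> omega) hd
  · have := i.isLt; have := j.isLt
    simp only [rowK, pat3]
    split_ifs <;> omega
  · have := i.isLt
    cases s <;> simp only [rowK, pat3, Bool.false_eq_true, if_true, if_false] <;>
      split_ifs <;> omega

theorem energyH_rowsLt_pat3 {n k d1 d2 a ab : ℕ} {s : Bool} (hk : 2 ≤ k) (hkn : k + 2 ≤ n)
    (hab : a ≤ ab) (hab2 : ab ≤ d2) (hd : d2 ≤ d1) :
    energyH (rowsLt (pat3 n k d1 d1 d1 s hk hkn)) (rowsLt (pat3 n k d2 a ab s hk hkn))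
      = ((if s then a else ab : ℕ) : ℤ) - d2 := by
  obtain ⟨m, rfl⟩ : ∃ m, k = m + 2 := ⟨k - 2, by omega⟩
  refine energyH_staircase (m := m) (a := 1) _ _ (fun i j => ?_) (fun i j => ?_)
    (by split <;> omega) hd
  · have := i.isLt; have := j.isLt
    simp only [rowsLt, pat3, Fin.val_castLE]
    split_ifs <;> omega
  · have := i.isLt
    cases s <;> simp only [rowsLt, pat3, Fin.val_castLE, Bool.false_eq_true, if_true, if_false] <;>
      split_ifs <;> omega

end BBS

open BBS in
/-- with `u = [𝟏^{d₁}] ∈ B^{k,d₁}` and `v = [𝟏^β 𝟐_±^{d₂-α-β} 𝟑^α] ∈ B^{k,d₂}`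
(`d₁ > d₂ ≥ α + β`), the total phase shift equals
`2d₂ + H(u_k ⊗ v_k) + H(u_{<k} ⊗ v_{<k}) = d₂ - α + β`. -/
theorem phase_shift_value {n k : ℕ} (hk : 2 ≤ k) (hkn : k + 2 ≤ n)
    (d1 d2 α β : ℕ) (hd21 : d2 < d1) (hab : α + β ≤ d2) (s : Bool) :
    2 * (d2:ℤ)
      + energyH (rowK (by omega) (pat3 n k d1 d1 d1 s hk hkn))
          (rowK (by omega) (pat3 n k d2 β (d2 - α) s hk hkn))
      + energyH (rowsLt (pat3 n k d1 d1 d1 s hk hkn))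
          (rowsLt (pat3 n k d2 β (d2 - α) s hk hkn))
      = (d2:ℤ) - (α:ℤ) + (β:ℤ) := by
  rw [energyH_rowK_pat3 hk hkn _ (by omega) (by omega) hd21.le,
    energyH_rowsLt_pat3 hk hkn (by omega) (by omega) hd21.le]
  cases s <;> simp <;> omega
end
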